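/- arXiv:1907.05679 — 6 statements merged into one kernel-verified Lean document; each statement's English description precedes it below -/
import Mathlib

section
/- Let V, f₁, f₂ : (-∞,0] → M_n(ℂ) be continuous, bounded, Hermitian-matrix-valued functions such that f₁(x) is positive definite for every x and f₂(x) − δ·I is positive semidefinite for every x, for some fixed δ > 0. Let c ∈ M_n(ℂ) be Hermitian and let φ : ℝ → M_n(ℂ) be continuously differentiable with φ(λ) Hermitian for every real λ, φ(0) = 0, and φ′(λ) negative definite for every λ > 0. Then there exists ν ∈ ℝ, independent of λ and y, such that every λ ∈ ℝ for which there exists a nonzero H²-solution y on (-∞,0] of y″(x) + V(x)y(x) = λ f₁(x)y(x) + λ² f₂(x)y(x) with boundary condition (c + φ(λ))y(0) = y′(0), satisfies λ ≤ √(‖f₂‖_{L∞} · |ν|)/δ. -/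
open MeasureTheory Matrix Set
open scoped ComplexOrder

noncomputable section

/-- Action of a complex `n × n` matrix on `ℂⁿ` with the Euclidean structure. -/
def mact {n : ℕ} (M : Matrix (Fin n) (Fin n) ℂ) (v : EuclideanSpace ℂ (Fin n)) :
    EuclideanSpace ℂ (Fin n) :=
  Matrix.toEuclideanCLM (𝕜 := ℂ) M v

/-!
Pairing the equation with `y` shows that `h = ‖y‖²` satisfies `h'' ≥ k² h` on `(-∞, 0]` with
`k² = 2(λ²δ - λC - C)`, where `C` bounds `V` and `f₁`. Integrability of `h` forces `h' ≥ 0`, and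
then `e^{kx} (h' - k h)`, whose derivative is `e^{kx} (h'' - k² h) ≥ 0`, is nondecreasing and
bounded below by `-k h`, so `h'(0) ≥ k h(0)`. On the other hand the Robin condition and
`φ(λ) ≤ 0` (from `φ(0) = 0`, `φ' < 0`) give `h'(0) ≤ 2‖c‖ h(0)`. Hence `k ≤ 2‖c‖`, which bounds
`λ` by some `λ₀`; since `f₂ ≥ δ` forces `‖f₂‖_∞ ≥ δ`, the choice `ν = δ λ₀²` works.
-/

open scoped InnerProductSpace

theorem EuclideanSpace.real_inner_eq_re_inner {ι : Type*} [Fintype ι] (v w : EuclideanSpace ℂ ι) :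
    ⟪v, w⟫_ℝ = RCLike.re ⟪v, w⟫_ℂ := by
  simp only [PiLp.inner_apply, map_sum]
  exact Finset.sum_congr rfl fun i _ => _root_.real_inner_eq_re_inner ℂ (v i) (w i)

section QuadraticForm

variable {n : ℕ}

theorem real_inner_mact_eq_re_dotProduct (M : Matrix (Fin n) (Fin n) ℂ)
    (v : EuclideanSpace ℂ (Fin n)) : ⟪v, mact M v⟫_ℝ = (star v.ofLp ⬝ᵥ M *ᵥ v.ofLp).re := by
  rw [EuclideanSpace.real_inner_eq_re_inner, EuclideanSpace.inner_eq_star_dotProduct, mact,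
    ofLp_toEuclideanCLM, dotProduct_comm]
  rfl

theorem real_inner_mact_nonneg_of_posSemidef {M : Matrix (Fin n) (Fin n) ℂ} (hM : M.PosSemidef)
    (v : EuclideanSpace ℂ (Fin n)) : 0 ≤ ⟪v, mact M v⟫_ℝ := by
  rw [EuclideanSpace.real_inner_eq_re_inner]
  exact (Matrix.isPositive_toEuclideanLin_iff.mpr hM).re_inner_nonneg_right v

theorem abs_real_inner_mact_le (M : Matrix (Fin n) (Fin n) ℂ) (v : EuclideanSpace ℂ (Fin n)) :
    |⟪v, mact M v⟫_ℝ| ≤ ‖toEuclideanCLM (𝕜 := ℂ) M‖ * ‖v‖ ^ 2 :=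
  calc |⟪v, mact M v⟫_ℝ| ≤ ‖v‖ * ‖mact M v‖ := abs_real_inner_le_norm _ _
    _ ≤ ‖v‖ * (‖toEuclideanCLM (𝕜 := ℂ) M‖ * ‖v‖) := by
      gcongr; exact (toEuclideanCLM (𝕜 := ℂ) M).le_opNorm v
    _ = ‖toEuclideanCLM (𝕜 := ℂ) M‖ * ‖v‖ ^ 2 := by ring

theorem mul_norm_sq_le_real_inner_mact {δ : ℝ} {M : Matrix (Fin n) (Fin n) ℂ}
    (hM : (M - (δ : ℂ) • (1 : Matrix (Fin n) (Fin n) ℂ)).PosSemidef)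
    (v : EuclideanSpace ℂ (Fin n)) : δ * ‖v‖ ^ 2 ≤ ⟪v, mact M v⟫_ℝ := by
  have hshift : mact (M - (δ : ℂ) • 1) v = mact M v - δ • v := by
    rw [RCLike.real_smul_eq_coe_smul (K := ℂ), mact, mact, map_sub, map_smul, map_one]
    rfl
  have h := real_inner_mact_nonneg_of_posSemidef hM v
  rw [hshift, inner_sub_right, real_inner_smul_right, real_inner_self_eq_norm_sq] at h
  linarith

theorem le_norm_toEuclideanCLM_of_posSemidef_sub {δ : ℝ} {M : Matrix (Fin n) (Fin n) ℂ}
    (hM : (M - (δ : ℂ) • (1 : Matrix (Fin n) (Fin n) ℂ)).PosSemidef)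
    {v : EuclideanSpace ℂ (Fin n)} (hv : v ≠ 0) : δ ≤ ‖toEuclideanCLM (𝕜 := ℂ) M‖ :=
  le_of_mul_le_mul_right ((mul_norm_sq_le_real_inner_mact hM v).trans
    ((le_abs_self _).trans (abs_real_inner_mact_le M v))) (by positivity)

theorem real_inner_mact_nonpos_of_hasDerivAt {φ φ' : ℝ → Matrix (Fin n) (Fin n) ℂ}
    (hφ : ∀ (t : ℝ) (i j : Fin n), HasDerivAt (fun s => φ s i j) (φ' t i j) t) (hφ0 : φ 0 = 0)
    (hφ' : ∀ t : ℝ, 0 < t → (-(φ' t)).PosDef) {t : ℝ} (ht : 0 < t)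
    (v : EuclideanSpace ℂ (Fin n)) : ⟪v, mact (φ t) v⟫_ℝ ≤ 0 := by
  set x := v.ofLp
  have hderiv : ∀ s, HasDerivAt (fun s => star x ⬝ᵥ φ s *ᵥ x) (star x ⬝ᵥ φ' s *ᵥ x) s := fun s =>
    HasDerivAt.fun_sum fun i _ =>
      (HasDerivAt.fun_sum fun j _ => (hφ s i j).mul_const (x j)).const_mul (star x i)
  have hderiv_re : ∀ s, HasDerivAt (fun s => (star x ⬝ᵥ φ s *ᵥ x).re)
      (star x ⬝ᵥ φ' s *ᵥ x).re s := fun s =>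
    Complex.reCLM.hasFDerivAt.comp_hasDerivAt s (hderiv s)
  have hanti : AntitoneOn (fun s => (star x ⬝ᵥ φ s *ᵥ x).re) (Ici 0) := by
    refine antitoneOn_of_deriv_nonpos (convex_Ici 0)
      (fun s _ => (hderiv_re s).continuousAt.continuousWithinAt)
      (fun s _ => (hderiv_re s).differentiableAt.differentiableWithinAt) fun s hs => ?_
    rw [interior_Ici] at hs
    rw [(hderiv_re s).deriv]
    by_cases hx : x = 0
    · simp [hx]
    · have := (hφ' s hs).re_dotProduct_pos hx
      simp only [neg_mulVec, dotProduct_neg, map_neg, RCLike.re_to_complex] at this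
      linarith
  rw [real_inner_mact_eq_re_dotProduct]
  simpa [hφ0] using hanti self_mem_Ici ht.le ht.le

end QuadraticForm

section HalfLine

theorem exists_lt_of_integrableOn_Iic {h : ℝ → ℝ} {z ε : ℝ} (hint : IntegrableOn h (Iic z))
    (hε : 0 < ε) : ∃ x ≤ z, h x < ε := by
  by_contra! hge
  have hsub : Iic z ⊆ {x | ε ≤ ‖h x‖} := fun x hx => (hge x hx).trans (le_abs_self _)
  have := (Integrable.measure_norm_ge_lt_top hint hε).trans_le'
    ((measure_mono hsub).trans_eq' (Measure.restrict_apply_self _ _).symm)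
  simp at this

theorem monotoneOn_Iic_of_hasDerivWithinAt_nonneg {f f' : ℝ → ℝ} {z : ℝ}
    (hf : ∀ x ∈ Iic z, HasDerivWithinAt f (f' x) (Iic z) x) (hf' : ∀ x ∈ Iic z, 0 ≤ f' x) :
    MonotoneOn f (Iic z) :=
  monotoneOn_of_hasDerivWithinAt_nonneg (convex_Iic z) (fun x hx => (hf x hx).continuousWithinAt)
    (fun x hx => by
      rw [interior_Iic] at hx ⊢
      exact (hf x (mem_Iic.mpr (mem_Iio.mp hx).le)).mono Iio_subset_Iic_self)
    fun x hx => hf' x (interior_subset hx)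

variable {h p q : ℝ → ℝ}

theorem deriv_nonneg_of_integrableOn_Iic (hh0 : ∀ x ∈ Iic (0 : ℝ), 0 ≤ h x)
    (hint : IntegrableOn h (Iic 0)) (hh : ∀ x ∈ Iic (0 : ℝ), HasDerivWithinAt h (p x) (Iic 0) x)
    (hp : ∀ x ∈ Iic (0 : ℝ), HasDerivWithinAt p (q x) (Iic 0) x) (hq : ∀ x ∈ Iic (0 : ℝ), 0 ≤ q x)
    {x₀ : ℝ} (hx₀ : x₀ ≤ 0) : 0 ≤ p x₀ := by
  by_contra! hneg
  have hp_mono : MonotoneOn p (Iic 0) := monotoneOn_Iic_of_hasDerivWithinAt_nonneg hp hq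
  -- left of `x₀` the slope of `h` is at most `p x₀ < 0`, so `h` grows at least linearly at `-∞`
  have hslope : MonotoneOn (fun x => p x₀ * x - h x) (Iic x₀) := by
    refine monotoneOn_Iic_of_hasDerivWithinAt_nonneg (f' := fun x => p x₀ * 1 - p x)
      (fun x hx => ((hasDerivWithinAt_id x _).const_mul (p x₀)).sub
        ((hh x (le_trans hx hx₀)).mono (Iic_subset_Iic.mpr hx₀))) fun x hx => ?_
    simpa using hp_mono (le_trans hx hx₀) hx₀ hx
  obtain ⟨x, hx, hhx⟩ := exists_lt_of_integrableOn_Iic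
    (hint.mono_set (Iic_subset_Iic.mpr (by linarith : x₀ - 1 ≤ 0))) (neg_pos.mpr hneg)
  have := hslope (show x ≤ x₀ by linarith) self_mem_Iic (by linarith)
  nlinarith [hh0 x₀ hx₀]

theorem monotoneOn_Iic_of_integrableOn_of_deriv2_nonneg (hh0 : ∀ x ∈ Iic (0 : ℝ), 0 ≤ h x)
    (hint : IntegrableOn h (Iic 0)) (hh : ∀ x ∈ Iic (0 : ℝ), HasDerivWithinAt h (p x) (Iic 0) x)
    (hp : ∀ x ∈ Iic (0 : ℝ), HasDerivWithinAt p (q x) (Iic 0) x) (hq : ∀ x ∈ Iic (0 : ℝ), 0 ≤ q x) :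
    MonotoneOn h (Iic 0) :=
  monotoneOn_Iic_of_hasDerivWithinAt_nonneg hh fun _ hx =>
    deriv_nonneg_of_integrableOn_Iic hh0 hint hh hp hq hx

theorem mul_le_deriv_zero_of_sq_mul_le_deriv2 (hh0 : ∀ x ∈ Iic (0 : ℝ), 0 ≤ h x)
    (hint : IntegrableOn h (Iic 0)) (hh : ∀ x ∈ Iic (0 : ℝ), HasDerivWithinAt h (p x) (Iic 0) x)
    (hp : ∀ x ∈ Iic (0 : ℝ), HasDerivWithinAt p (q x) (Iic 0) x) {k : ℝ} (hk : 0 < k)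
    (hq : ∀ x ∈ Iic (0 : ℝ), k ^ 2 * h x ≤ q x) : k * h 0 ≤ p 0 := by
  set w := fun x => Real.exp (k * x) * (p x - k * h x)
  have hw : MonotoneOn w (Iic 0) := by
    refine monotoneOn_Iic_of_hasDerivWithinAt_nonneg
      (f' := fun x => Real.exp (k * x) * (q x - k ^ 2 * h x)) (fun x hx => ?_)
      fun x hx => mul_nonneg (Real.exp_pos _).le (sub_nonneg.mpr (hq x hx))
    refine ((((hasDerivAt_id' x).const_mul k).exp.hasDerivWithinAt).mul
      ((hp x hx).fun_sub ((hh x hx).const_mul k))).congr_deriv ?_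
    ring
  -- `w ≥ -k h` and `h` takes arbitrarily small values, so `w 0 ≥ 0`
  have hw_ge : ∀ x ∈ Iic (0 : ℝ), -(k * h x) ≤ w x := fun x hx => by
    have hexp : Real.exp (k * x) ≤ 1 := Real.exp_le_one_iff.mpr (by nlinarith [mem_Iic.mp hx])
    have hpx := deriv_nonneg_of_integrableOn_Iic hh0 hint hh hp
      (fun x hx => (mul_nonneg (by positivity) (hh0 x hx)).trans (hq x hx)) hx
    nlinarith [Real.exp_pos (k * x), hh0 x hx, mul_nonneg hk.le (hh0 x hx)]
  by_contra! hlt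
  have hw0 : w 0 < 0 := by simp [w]; linarith
  obtain ⟨x, hx, hhx⟩ := exists_lt_of_integrableOn_Iic hint (div_pos (neg_pos.mpr hw0) hk)
  have := hw hx self_mem_Iic hx
  have := hw_ge x hx
  rw [lt_div_iff₀ hk] at hhx
  linarith

end HalfLine

section Robin

variable {n : ℕ}

theorem mul_norm_sq_le_real_inner_of_eq {V f₁ f₂ : Matrix (Fin n) (Fin n) ℂ} {C δ lam : ℝ}
    (hlam : 0 ≤ lam) (hV : ‖toEuclideanCLM (𝕜 := ℂ) V‖ ≤ C)
    (hf₁ : ‖toEuclideanCLM (𝕜 := ℂ) f₁‖ ≤ C)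
    (hf₂ : (f₂ - (δ : ℂ) • (1 : Matrix (Fin n) (Fin n) ℂ)).PosSemidef)
    {v w : EuclideanSpace ℂ (Fin n)}
    (hvw : w + mact V v = (lam : ℂ) • mact f₁ v + (lam : ℂ) ^ 2 • mact f₂ v) :
    (lam ^ 2 * δ - lam * C - C) * ‖v‖ ^ 2 ≤ ⟪v, w⟫_ℝ := by
  have hw : ⟪v, w⟫_ℝ
      = lam * ⟪v, mact f₁ v⟫_ℝ + lam ^ 2 * ⟪v, mact f₂ v⟫_ℝ - ⟪v, mact V v⟫_ℝ := by
    rw [eq_sub_of_add_eq hvw, ← Complex.ofReal_pow, Complex.coe_smul, Complex.coe_smul,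
      inner_sub_right, inner_add_right, real_inner_smul_right, real_inner_smul_right]
  have hV' := abs_le.mp ((abs_real_inner_mact_le V v).trans
    (mul_le_mul_of_nonneg_right hV (by positivity)))
  have hf₁' := abs_le.mp ((abs_real_inner_mact_le f₁ v).trans
    (mul_le_mul_of_nonneg_right hf₁ (by positivity)))
  have hf₂' := mul_norm_sq_le_real_inner_mact hf₂ v
  rw [hw]
  nlinarith [mul_le_mul_of_nonneg_left hf₁'.1 hlam, mul_le_mul_of_nonneg_left hf₂' (sq_nonneg lam)]

theorem real_inner_mact_add_le_of_hasDerivAt {c : Matrix (Fin n) (Fin n) ℂ}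
    {φ φ' : ℝ → Matrix (Fin n) (Fin n) ℂ}
    (hφ : ∀ (t : ℝ) (i j : Fin n), HasDerivAt (fun s => φ s i j) (φ' t i j) t) (hφ0 : φ 0 = 0)
    (hφ' : ∀ t : ℝ, 0 < t → (-(φ' t)).PosDef) {t : ℝ} (ht : 0 < t)
    (v : EuclideanSpace ℂ (Fin n)) :
    ⟪v, mact (c + φ t) v⟫_ℝ ≤ ‖toEuclideanCLM (𝕜 := ℂ) c‖ * ‖v‖ ^ 2 := by
  have hadd : mact (c + φ t) v = mact c v + mact (φ t) v := by
    rw [mact, map_add]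
    rfl
  rw [hadd, inner_add_right]
  linarith [(le_abs_self _).trans (abs_real_inner_mact_le c v),
    real_inner_mact_nonpos_of_hasDerivAt hφ hφ0 hφ' ht v]

theorem le_max_of_robin_eigenfunction {V f₁ f₂ : ℝ → Matrix (Fin n) (Fin n) ℂ}
    {c : Matrix (Fin n) (Fin n) ℂ} {φ φ' : ℝ → Matrix (Fin n) (Fin n) ℂ} {C δ lam : ℝ}
    (hδ : 0 < δ) (hV : ∀ x ∈ Iic (0 : ℝ), ‖toEuclideanCLM (𝕜 := ℂ) (V x)‖ ≤ C)
    (hf₁ : ∀ x ∈ Iic (0 : ℝ), ‖toEuclideanCLM (𝕜 := ℂ) (f₁ x)‖ ≤ C)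
    (hf₂ : ∀ x ∈ Iic (0 : ℝ), (f₂ x - (δ : ℂ) • (1 : Matrix (Fin n) (Fin n) ℂ)).PosSemidef)
    (hφ : ∀ (t : ℝ) (i j : Fin n), HasDerivAt (fun s => φ s i j) (φ' t i j) t) (hφ0 : φ 0 = 0)
    (hφ' : ∀ t : ℝ, 0 < t → (-(φ' t)).PosDef) {y y' y'' : ℝ → EuclideanSpace ℂ (Fin n)}
    (hy_ne : ∃ x ∈ Iic (0 : ℝ), y x ≠ 0)
    (hy : ∀ x ∈ Iic (0 : ℝ), HasDerivWithinAt y (y' x) (Iic 0) x)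
    (hy' : ∀ x ∈ Iic (0 : ℝ), HasDerivWithinAt y' (y'' x) (Iic 0) x)
    (hint : IntegrableOn (fun x => ‖y x‖ ^ 2) (Iic 0))
    (hode : ∀ x ∈ Iic (0 : ℝ), y'' x + mact (V x) (y x)
      = (lam : ℂ) • mact (f₁ x) (y x) + (lam : ℂ) ^ 2 • mact (f₂ x) (y x))
    (hbc : mact (c + φ lam) (y 0) = y' 0) :
    lam ≤ max 1 ((2 * C + 2 * ‖toEuclideanCLM (𝕜 := ℂ) c‖ ^ 2) / δ) := by
  set B := ‖toEuclideanCLM (𝕜 := ℂ) c‖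
  by_contra! hlam
  have hlam1 : 1 < lam := (le_max_left _ _).trans_lt hlam
  have hlamδ : 2 * C + 2 * B ^ 2 < lam * δ :=
    (div_lt_iff₀ hδ).mp ((le_max_right _ _).trans_lt hlam)
  have hC : 0 ≤ C := (norm_nonneg _).trans (hV 0 self_mem_Iic)
  set h := fun x => ‖y x‖ ^ 2
  set p := fun x => 2 * ⟪y x, y' x⟫_ℝ
  have hh : ∀ x ∈ Iic (0 : ℝ), HasDerivWithinAt h (p x) (Iic 0) x := fun x hx =>
    (hy x hx).norm_sq
  have hp : ∀ x ∈ Iic (0 : ℝ), HasDerivWithinAt p (2 * (⟪y x, y'' x⟫_ℝ + ⟪y' x, y' x⟫_ℝ))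
      (Iic 0) x := fun x hx => ((hy x hx).inner ℝ (hy' x hx)).const_mul 2
  have hk2 : 4 * B ^ 2 < 2 * (lam ^ 2 * δ - lam * C - C) := by nlinarith
  have hk2_pos : 0 < 2 * (lam ^ 2 * δ - lam * C - C) :=
    (by positivity : 0 ≤ 4 * B ^ 2).trans_lt hk2
  set k := √(2 * (lam ^ 2 * δ - lam * C - C))
  have hk : 0 < k := Real.sqrt_pos.mpr hk2_pos
  have hksq : k ^ 2 = 2 * (lam ^ 2 * δ - lam * C - C) := Real.sq_sqrt hk2_pos.le
  have hq : ∀ x ∈ Iic (0 : ℝ), k ^ 2 * h x ≤ 2 * (⟪y x, y'' x⟫_ℝ + ⟪y' x, y' x⟫_ℝ) :=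
    fun x hx => by
      have := mul_norm_sq_le_real_inner_of_eq (by linarith) (hV x hx) (hf₁ x hx) (hf₂ x hx)
        (hode x hx)
      rw [hksq]
      nlinarith [real_inner_self_nonneg (x := y' x)]
  have hh0 : ∀ x ∈ Iic (0 : ℝ), 0 ≤ h x := fun x _ => by positivity
  have hkh : k * h 0 ≤ p 0 := mul_le_deriv_zero_of_sq_mul_le_deriv2 hh0 hint hh hp hk hq
  have hbdry : p 0 ≤ 2 * B * h 0 := by
    have := real_inner_mact_add_le_of_hasDerivAt (c := c) hφ hφ0 hφ' (t := lam) (by linarith)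
      (y 0)
    rw [hbc] at this
    simp only [p, h]
    linarith
  have hpos : 0 < h 0 := by
    obtain ⟨x, hx, hyx⟩ := hy_ne
    have hmono : MonotoneOn h (Iic 0) := monotoneOn_Iic_of_integrableOn_of_deriv2_nonneg hh0 hint
      hh hp fun x hx => (mul_nonneg (sq_nonneg k) (hh0 x hx)).trans (hq x hx)
    exact (by positivity : 0 < h x).trans_le (hmono hx self_mem_Iic hx)
  have hk2B : k ≤ 2 * B := le_of_mul_le_mul_right (hkh.trans hbdry) hpos
  nlinarith

end Robin

theorem halfline_robin_real_eigenvalue_upper_bound_general {n : ℕ}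
    (V f₁ f₂ : ℝ → Matrix (Fin n) (Fin n) ℂ) (δ : ℝ) (hδ : 0 < δ)
    (hbdd : ∃ C : ℝ, ∀ x ∈ Iic (0 : ℝ),
      ‖Matrix.toEuclideanCLM (𝕜 := ℂ) (V x)‖ ≤ C ∧
      ‖Matrix.toEuclideanCLM (𝕜 := ℂ) (f₁ x)‖ ≤ C ∧
      ‖Matrix.toEuclideanCLM (𝕜 := ℂ) (f₂ x)‖ ≤ C)
    (hf₂pos : ∀ x ∈ Iic (0 : ℝ), (f₂ x - (δ : ℂ) • (1 : Matrix (Fin n) (Fin n) ℂ)).PosSemidef)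
    (c : Matrix (Fin n) (Fin n) ℂ)
    (φ φ' : ℝ → Matrix (Fin n) (Fin n) ℂ)
    (hφdiff : ∀ (t : ℝ) (i j : Fin n), HasDerivAt (fun s => φ s i j) (φ' t i j) t)
    (hφ0 : φ 0 = 0)
    (hφ'neg : ∀ t : ℝ, 0 < t → (-(φ' t)).PosDef) :
    ∃ ν : ℝ, ∀ lam : ℝ,
      (∃ y y' y'' : ℝ → EuclideanSpace ℂ (Fin n),
        (∃ x ∈ Iic (0 : ℝ), y x ≠ 0) ∧
        (∀ x ∈ Iic (0 : ℝ), HasDerivWithinAt y (y' x) (Iic 0) x) ∧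
        (∀ x ∈ Iic (0 : ℝ), HasDerivWithinAt y' (y'' x) (Iic 0) x) ∧
        ContinuousOn y'' (Iic 0) ∧
        Integrable (fun x => ‖y x‖ ^ 2) (volume.restrict (Iic 0)) ∧
        Integrable (fun x => ‖y' x‖ ^ 2) (volume.restrict (Iic 0)) ∧
        Integrable (fun x => ‖y'' x‖ ^ 2) (volume.restrict (Iic 0)) ∧
        (∀ x ∈ Iic (0 : ℝ), y'' x + mact (V x) (y x)
            = (lam : ℂ) • mact (f₁ x) (y x) + (lam : ℂ) ^ 2 • mact (f₂ x) (y x)) ∧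
        mact (c + φ lam) (y 0) = y' 0) →
      lam ≤ Real.sqrt
          ((⨆ x : Iic (0 : ℝ), ‖Matrix.toEuclideanCLM (𝕜 := ℂ) (f₂ (x : ℝ))‖) * |ν|) / δ := by
  obtain ⟨C, hC⟩ := hbdd
  set lam₀ := max 1 ((2 * C + 2 * ‖toEuclideanCLM (𝕜 := ℂ) c‖ ^ 2) / δ)
  have hlam₀ : 0 < lam₀ := one_pos.trans_le (le_max_left _ _)
  refine ⟨δ * lam₀ ^ 2, ?_⟩
  rintro lam ⟨y, y', y'', ⟨x, hx, hyx⟩, hy, hy', -, hint, -, -, hode, hbc⟩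
  have hlam : lam ≤ lam₀ := le_max_of_robin_eigenfunction hδ (fun x hx => (hC x hx).1)
    (fun x hx => (hC x hx).2.1) hf₂pos hφdiff hφ0 hφ'neg ⟨x, hx, hyx⟩ hy hy' hint hode hbc
  have hsup : δ ≤ ⨆ x : Iic (0 : ℝ), ‖Matrix.toEuclideanCLM (𝕜 := ℂ) (f₂ (x : ℝ))‖ :=
    (le_norm_toEuclideanCLM_of_posSemidef_sub (hf₂pos x hx) hyx).trans
      (le_ciSup (f := fun x : Iic (0 : ℝ) => ‖toEuclideanCLM (𝕜 := ℂ) (f₂ x)‖)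
        ⟨C, by rintro _ ⟨x, rfl⟩; exact (hC x x.2).2.2⟩ ⟨x, hx⟩)
  calc lam ≤ lam₀ := hlam
    _ = √((δ * lam₀) ^ 2) / δ := by rw [Real.sqrt_sq (by positivity)]; field_simp
    _ ≤ _ := by
      rw [abs_of_pos (by positivity)]
      gcongr
      nlinarith

/-- every real eigenvalue of the half-line Robin problem satisfies
`λ ≤ √(‖f₂‖_{L∞} |ν|) / δ`, for some `ν` independent of `λ` and `y`. -/
theorem halfline_robin_real_eigenvalue_upper_bound {n : ℕ} (hn : 1 ≤ n)
    (V f₁ f₂ : ℝ → Matrix (Fin n) (Fin n) ℂ) (δ : ℝ) (hδ : 0 < δ)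
    (hVcont : ContinuousOn V (Iic 0))
    (hf₁cont : ContinuousOn f₁ (Iic 0))
    (hf₂cont : ContinuousOn f₂ (Iic 0))
    (hbdd : ∃ C : ℝ, ∀ x ∈ Iic (0 : ℝ),
      ‖Matrix.toEuclideanCLM (𝕜 := ℂ) (V x)‖ ≤ C ∧
      ‖Matrix.toEuclideanCLM (𝕜 := ℂ) (f₁ x)‖ ≤ C ∧
      ‖Matrix.toEuclideanCLM (𝕜 := ℂ) (f₂ x)‖ ≤ C)
    (hVherm : ∀ x ∈ Iic (0 : ℝ), (V x).IsHermitian)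
    (hf₁herm : ∀ x ∈ Iic (0 : ℝ), (f₁ x).IsHermitian)
    (hf₂herm : ∀ x ∈ Iic (0 : ℝ), (f₂ x).IsHermitian)
    (hf₁pos : ∀ x ∈ Iic (0 : ℝ), (f₁ x).PosDef)
    (hf₂pos : ∀ x ∈ Iic (0 : ℝ), (f₂ x - (δ : ℂ) • (1 : Matrix (Fin n) (Fin n) ℂ)).PosSemidef)
    (c : Matrix (Fin n) (Fin n) ℂ) (hc : c.IsHermitian)
    (φ φ' : ℝ → Matrix (Fin n) (Fin n) ℂ)
    (hφdiff : ∀ (t : ℝ) (i j : Fin n), HasDerivAt (fun s => φ s i j) (φ' t i j) t)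
    (hφ'cont : Continuous φ')
    (hφherm : ∀ t : ℝ, (φ t).IsHermitian)
    (hφ0 : φ 0 = 0)
    (hφ'neg : ∀ t : ℝ, 0 < t → (-(φ' t)).PosDef) :
    ∃ ν : ℝ, ∀ lam : ℝ,
      (∃ y y' y'' : ℝ → EuclideanSpace ℂ (Fin n),
        (∃ x ∈ Iic (0 : ℝ), y x ≠ 0) ∧
        (∀ x ∈ Iic (0 : ℝ), HasDerivWithinAt y (y' x) (Iic 0) x) ∧
        (∀ x ∈ Iic (0 : ℝ), HasDerivWithinAt y' (y'' x) (Iic 0) x) ∧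
        ContinuousOn y'' (Iic 0) ∧
        Integrable (fun x => ‖y x‖ ^ 2) (volume.restrict (Iic 0)) ∧
        Integrable (fun x => ‖y' x‖ ^ 2) (volume.restrict (Iic 0)) ∧
        Integrable (fun x => ‖y'' x‖ ^ 2) (volume.restrict (Iic 0)) ∧
        (∀ x ∈ Iic (0 : ℝ), y'' x + mact (V x) (y x)
            = (lam : ℂ) • mact (f₁ x) (y x) + (lam : ℂ) ^ 2 • mact (f₂ x) (y x)) ∧
        mact (c + φ lam) (y 0) = y' 0) →
      lam ≤ Real.sqrt
          ((⨆ x : Iic (0 : ℝ), ‖Matrix.toEuclideanCLM (𝕜 := ℂ) (f₂ (x : ℝ))‖) * |ν|) / δ :=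
  halfline_robin_real_eigenvalue_upper_bound_general V f₁ f₂ δ hδ hbdd hf₂pos c φ φ' hφdiff hφ0
    hφ'neg
end
end

section
/- Let M : ℝ → M_n(ℂ) be a matrix-valued function such that M(λ) is Hermitian and positive definite for every λ ∈ ℝ, and suppose M is differentiable at λ₀ with derivative M′(λ₀) Hermitian and positive definite. If the map λ ↦ √(M(λ)) is differentiable at λ₀ with derivative S, then S is positive definite. -/
open Matrix
open scoped ComplexOrder

noncomputable section

/-- The positive semidefinite square root of a positive semidefinite matrix
(the definition removed from Mathlib, restated with its old meaning). -/
def Matrix.PosSemidef.sqrt {n : Type*} [Fintype n] [DecidableEq n] {𝕜 : Type*} [RCLike 𝕜]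
    {A : Matrix n n 𝕜} (hA : A.PosSemidef) : Matrix n n 𝕜 :=
  hA.1.eigenvectorUnitary.1 * diagonal ((↑) ∘ (√·) ∘ hA.1.eigenvalues) *
    (star hA.1.eigenvectorUnitary : Matrix n n 𝕜)

/-!
Differentiating `√M(λ) * √M(λ) = M(λ)` at `λ₀` gives the Sylvester equation
`M′(λ₀) = S Q + Q S` with `Q = √M(λ₀)` positive definite, and `S` is Hermitian as a limit of
differences of Hermitian matrices. For an eigenvector `v` of `S` with eigenvalue `μ` this yields
`v* M′(λ₀) v = 2 μ (v* Q v)`, and both quadratic forms are positive, so `μ > 0`.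
-/

namespace Matrix

variable {m 𝕜 : Type*} [Fintype m] [DecidableEq m] [RCLike 𝕜]

lemma PosSemidef.sqrt_eq_cfc {A : Matrix m m 𝕜} (hA : A.PosSemidef) :
    hA.sqrt = hA.1.cfc Real.sqrt := by
  simp [PosSemidef.sqrt, IsHermitian.cfc]

lemma PosSemidef.sqrt_mul_self {A : Matrix m m 𝕜} (hA : A.PosSemidef) :
    hA.sqrt * hA.sqrt = A := by
  conv_rhs => rw [hA.1.spectral_theorem]
  rw [sqrt_eq_cfc, IsHermitian.cfc, ← map_mul, diagonal_mul_diagonal]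
  congr 2
  ext i
  simp [← RCLike.ofReal_mul, Real.mul_self_sqrt (hA.eigenvalues_nonneg i)]

lemma PosDef.sqrt_posDef {A : Matrix m m 𝕜} (hA : A.PosDef) : hA.posSemidef.sqrt.PosDef := by
  simp [PosSemidef.sqrt, Unitary.isUnit_coe.posDef_star_right_conjugate_iff,
    posDef_diagonal_iff, hA.eigenvalues_pos]

lemma IsHermitian.posDef_of_posDef_mul_add_mul {S Q : Matrix m m 𝕜} (hS : S.IsHermitian)
    (hQ : Q.PosDef) (hSQ : (S * Q + Q * S).PosDef) : S.PosDef := by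
  refine hS.posDef_iff_eigenvalues_pos.mpr fun i => ?_
  set v : m → 𝕜 := ⇑(hS.eigenvectorBasis i)
  set μ := hS.eigenvalues i
  have hv : v ≠ 0 := (WithLp.ofLp_eq_zero 2).ne.2 <| hS.eigenvectorBasis.orthonormal.ne_zero i
  have hSv : S *ᵥ v = (μ : 𝕜) • v := by
    rw [hS.mulVec_eigenvectorBasis i, RCLike.real_smul_eq_coe_smul (K := 𝕜)]
  have hvS : star v ᵥ* S = (μ : 𝕜) • star v := by
    rw [← hS.eq, ← star_mulVec, hSv, star_smul, RCLike.star_def, RCLike.conj_ofReal]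
  have hform : star v ⬝ᵥ ((S * Q + Q * S) *ᵥ v) = 2 * μ * (star v ⬝ᵥ (Q *ᵥ v)) := by
    rw [add_mulVec, dotProduct_add, ← mulVec_mulVec, ← mulVec_mulVec, dotProduct_mulVec, hvS, hSv,
      mulVec_smul, smul_dotProduct, dotProduct_smul, smul_eq_mul]
    ring
  have hSQv := hSQ.re_dotProduct_pos hv
  rw [hform, ← RCLike.ofReal_ofNat, ← RCLike.ofReal_mul, RCLike.re_ofReal_mul] at hSQv
  linarith [pos_of_mul_pos_left hSQv (hQ.re_dotProduct_pos hv).le]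

end Matrix

section MatrixDeriv

variable {𝕜 : Type*} [NontriviallyNormedField 𝕜] {l m p : Type*} {x : 𝕜}

lemma hasDerivAt_matrix_mul [Fintype m] {R : Type*} [NormedRing R] [NormedAlgebra 𝕜 R]
    {A : 𝕜 → Matrix l m R} {B : 𝕜 → Matrix m p R} {A' : Matrix l m R} {B' : Matrix m p R}
    (hA : ∀ i j, HasDerivAt (fun t => A t i j) (A' i j) x)
    (hB : ∀ i j, HasDerivAt (fun t => B t i j) (B' i j) x) (i : l) (k : p) :
    HasDerivAt (fun t => (A t * B t) i k) ((A' * B x + A x * B') i k) x := by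
  simpa [mul_apply, Finset.sum_add_distrib] using
    HasDerivAt.fun_sum fun j _ => (hA i j).mul (hB j k)

lemma isHermitian_of_hasDerivAt [StarRing 𝕜] [TrivialStar 𝕜] {F : Type*} [NormedAddCommGroup F]
    [NormedSpace 𝕜 F] [StarAddMonoid F] [StarModule 𝕜 F] [ContinuousStar F]
    {Q : 𝕜 → Matrix m m F} {S : Matrix m m F} (hQ : ∀ t, (Q t).IsHermitian)
    (hS : ∀ i j, HasDerivAt (fun t => Q t i j) (S i j) x) : S.IsHermitian := by
  ext i j
  refine (HasDerivAt.unique ?_ (hS i j) : star (S j i) = S i j)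
  have hQij : (fun t => star (Q t j i)) = fun t => Q t i j := funext fun t => (hQ t).apply i j
  exact hQij ▸ (hS j i).star

end MatrixDeriv

theorem deriv_of_matrix_sqrt_posDef_general {n : ℕ}
    (M : ℝ → Matrix (Fin n) (Fin n) ℂ)
    (hMpos : ∀ lam : ℝ, (M lam).PosDef)
    (lam₀ : ℝ) (M' : Matrix (Fin n) (Fin n) ℂ)
    (hMdiff : ∀ i j : Fin n, HasDerivAt (fun lam => M lam i j) (M' i j) lam₀)
    (hM'pos : M'.PosDef)
    (S : Matrix (Fin n) (Fin n) ℂ)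
    (hSdiff : ∀ i j : Fin n,
      HasDerivAt (fun lam => ((hMpos lam).posSemidef.sqrt) i j) (S i j) lam₀) :
    S.PosDef := by
  set Q := fun lam => (hMpos lam).posSemidef.sqrt
  have hQ : ∀ lam, (Q lam).PosDef := fun lam => (hMpos lam).sqrt_posDef
  have hS : S.IsHermitian := isHermitian_of_hasDerivAt (fun lam => (hQ lam).1) hSdiff
  have hSylvester : M' = S * Q lam₀ + Q lam₀ * S := by
    ext i j
    refine (hMdiff i j).unique ?_
    simpa only [Q, PosSemidef.sqrt_mul_self] using hasDerivAt_matrix_mul hSdiff hSdiff i j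
  exact hS.posDef_of_posDef_mul_add_mul (hQ lam₀) (hSylvester ▸ hM'pos)

/-- if `λ ↦ √(M(λ))` is differentiable at `λ₀` with derivative `S`, and
`M(λ₀)` has Hermitian positive definite derivative `M′(λ₀)`, then `S` is positive
definite. -/
theorem deriv_of_matrix_sqrt_posDef {n : ℕ}
    (M : ℝ → Matrix (Fin n) (Fin n) ℂ)
    (hMherm : ∀ lam : ℝ, (M lam).IsHermitian)
    (hMpos : ∀ lam : ℝ, (M lam).PosDef)
    (lam₀ : ℝ) (M' : Matrix (Fin n) (Fin n) ℂ)
    (hMdiff : ∀ i j : Fin n, HasDerivAt (fun lam => M lam i j) (M' i j) lam₀)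
    (hM'herm : M'.IsHermitian) (hM'pos : M'.PosDef)
    (S : Matrix (Fin n) (Fin n) ℂ)
    (hSdiff : ∀ i j : Fin n,
      HasDerivAt (fun lam => ((hMpos lam).posSemidef.sqrt) i j) (S i j) lam₀) :
    S.PosDef :=
  deriv_of_matrix_sqrt_posDef_general M hMpos lam₀ M' hMdiff hM'pos S hSdiff
end
end

section
/- Let λ₀ ≥ 0, let V, f₁, f₂ : (-∞,0] → M_n(ℂ) be continuous, bounded, Hermitian-matrix-valued with f₁(x) positive definite and f₂(x) positive semidefinite for all x, and let B ∈ M_n(ℂ) be Hermitian. Suppose y₀ is a nonzero H²-solution on (-∞,0] of y₀″ + V y₀ = λ₀ f₁ y₀ + λ₀² f₂ y₀ with B y₀(0) = y₀′(0). Then there exists no H²-solution y₁ on (-∞,0] satisfying B y₁(0) = y₁′(0) and y₁″ + V y₁ − λ₀ f₁ y₁ − λ₀² f₂ y₁ = (f₁ + 2λ₀ f₂) y₀; that is, every nonnegative eigenvalue of the half-line Robin problem is semisimple. -/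
/-!
The pairing `W = Re (⟪y₀, y₁'⟫ - ⟪y₀', y₁⟫)` has derivative `Re ⟪y₀, (f₁ + 2λ₀ f₂) y₀⟫ ≥ 0`:
the terms in `V`, `f₁`, `f₂` cancel because these matrices are Hermitian and `λ₀` is real.
The Robin condition with `B` Hermitian gives `W 0 = 0`, and Cauchy–Schwarz makes `W` integrable
on `(-∞, 0]`. A nondecreasing function integrable on a half-line `(-∞, b]` is nonnegative there,
so `W ≡ 0`, hence its derivative vanishes, contradicting `f₁ > 0` at a point where `y₀ ≠ 0`.
-/

open MeasureTheory Matrix Set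
open scoped ComplexOrder

noncomputable section

open scoped InnerProductSpace

lemma MonotoneOn.nonneg_of_integrableOn_Iic {F : ℝ → ℝ} {b : ℝ} (hF : MonotoneOn F (Iic b))
    (hint : IntegrableOn F (Iic b)) {x : ℝ} (hx : x ≤ b) : 0 ≤ F x := by
  by_contra! hneg
  have hconst : IntegrableOn (fun _ ↦ F x) (Iic x) := by
    refine Integrable.mono (hint.mono_set (Iic_subset_Iic.2 hx)) aestronglyMeasurable_const ?_
    filter_upwards [ae_restrict_mem measurableSet_Iic] with t ht
    have hFt : F t ≤ F x := hF (ht.trans hx) hx ht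
    rw [Real.norm_eq_abs, Real.norm_eq_abs, abs_of_neg hneg, abs_of_neg (hFt.trans_lt hneg)]
    linarith
  simp [hneg.ne] at hconst

lemma eq_zero_of_hasDerivWithinAt_Iic_nonneg_of_integrableOn {F F' : ℝ → ℝ} {b : ℝ}
    (hF : ∀ x ∈ Iic b, HasDerivWithinAt F (F' x) (Iic b) x) (hF' : ∀ x ∈ Iic b, 0 ≤ F' x)
    (hb : F b = 0) (hint : IntegrableOn F (Iic b)) {x : ℝ} (hx : x ∈ Iic b) : F' x = 0 := by
  have hmono : MonotoneOn F (Iic b) := by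
    refine monotoneOn_of_hasDerivWithinAt_nonneg (f' := F') (convex_Iic b)
      (fun y hy ↦ (hF y hy).continuousWithinAt) (fun y hy ↦ ?_) (fun y hy ↦ ?_)
    all_goals rw [interior_Iic] at hy
    · rw [interior_Iic]; exact (hF y (Iio_subset_Iic_self hy)).mono Iio_subset_Iic_self
    · exact hF' y (Iio_subset_Iic_self hy)
  have hzero : ∀ y ∈ Iic b, F y = 0 := fun y hy ↦
    le_antisymm (hb ▸ hmono hy self_mem_Iic hy) (hmono.nonneg_of_integrableOn_Iic hint hy)
  exact (uniqueDiffOn_Iic b x hx).eq_deriv _ (hF x hx)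
    ((hasDerivWithinAt_const x _ 0).congr_of_mem hzero hx)

section Wronskian

variable (𝕜 : Type*) {E : Type*} [RCLike 𝕜] [NormedAddCommGroup E] [InnerProductSpace 𝕜 E]

def wronskian (u u' v v' : ℝ → E) (t : ℝ) : 𝕜 := ⟪u t, v' t⟫_𝕜 - ⟪u' t, v t⟫_𝕜

variable {𝕜}

lemma hasDerivWithinAt_wronskian [NormedSpace ℝ E] {u u' u'' v v' v'' : ℝ → E} {s : Set ℝ}
    {x : ℝ} (hu : HasDerivWithinAt u (u' x) s x) (hu' : HasDerivWithinAt u' (u'' x) s x)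
    (hv : HasDerivWithinAt v (v' x) s x) (hv' : HasDerivWithinAt v' (v'' x) s x) :
    HasDerivWithinAt (wronskian 𝕜 u u' v v') (⟪u x, v'' x⟫_𝕜 - ⟪u'' x, v x⟫_𝕜) s x :=
  ((hu.inner 𝕜 hv').sub (hu'.inner 𝕜 hv)).congr_deriv (by ring)

lemma integrable_inner_of_integrable_norm_sq {α : Type*} [MeasurableSpace α] {μ : Measure α}
    {u v : α → E} (hu : AEStronglyMeasurable u μ) (hv : AEStronglyMeasurable v μ)
    (hu2 : Integrable (fun x ↦ ‖u x‖ ^ 2) μ) (hv2 : Integrable (fun x ↦ ‖v x‖ ^ 2) μ) :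
    Integrable (fun x ↦ ⟪u x, v x⟫_𝕜) μ := by
  refine ((hu2.add hv2).div_const 2).mono' (hu.inner hv) (.of_forall fun x ↦ ?_)
  have := two_mul_le_add_sq ‖u x‖ ‖v x‖
  have := norm_inner_le_norm (𝕜 := 𝕜) (u x) (v x)
  dsimp only [Pi.add_apply]
  linarith

lemma integrableOn_wronskian {u u' v v' : ℝ → E} {s : Set ℝ} (hs : MeasurableSet s)
    (hu : ContinuousOn u s) (hu' : ContinuousOn u' s)
    (hv : ContinuousOn v s) (hv' : ContinuousOn v' s)
    (hu2 : IntegrableOn (fun x ↦ ‖u x‖ ^ 2) s) (hu'2 : IntegrableOn (fun x ↦ ‖u' x‖ ^ 2) s)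
    (hv2 : IntegrableOn (fun x ↦ ‖v x‖ ^ 2) s) (hv'2 : IntegrableOn (fun x ↦ ‖v' x‖ ^ 2) s) :
    IntegrableOn (wronskian 𝕜 u u' v v') s :=
  (integrable_inner_of_integrable_norm_sq (hu.aestronglyMeasurable hs)
      (hv'.aestronglyMeasurable hs) hu2 hv'2).sub
    (integrable_inner_of_integrable_norm_sq (hu'.aestronglyMeasurable hs)
      (hv.aestronglyMeasurable hs) hu'2 hv2)

lemma LinearMap.IsSymmetric.inner_sub_inner_eq {T : E →ₗ[𝕜] E} (hT : T.IsSymmetric)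
    {u u'' v v'' w : E} (hu : u'' + T u = 0) (hv : v'' + T v = w) :
    ⟪u, v''⟫_𝕜 - ⟪u'', v⟫_𝕜 = ⟪u, w⟫_𝕜 := by
  rw [← eq_sub_iff_add_eq] at hv
  rw [add_eq_zero_iff_eq_neg] at hu
  rw [hu, hv, inner_sub_right, inner_neg_left, hT]
  ring

end Wronskian

lemma HasDerivWithinAt.re {f : ℝ → ℂ} {f' : ℂ} {s : Set ℝ} {x : ℝ}
    (hf : HasDerivWithinAt f f' s x) : HasDerivWithinAt (fun t ↦ (f t).re) f'.re s x :=
  Complex.reCLM.hasFDerivAt.comp_hasDerivWithinAt x hf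

section MatrixAction

variable {n : ℕ}

lemma mact_eq_toEuclideanLin (M : Matrix (Fin n) (Fin n) ℂ) (v : EuclideanSpace ℂ (Fin n)) :
    mact M v = M.toEuclideanLin v := rfl

lemma Matrix.IsHermitian.inner_mact_left {M : Matrix (Fin n) (Fin n) ℂ} (hM : M.IsHermitian)
    (u v : EuclideanSpace ℂ (Fin n)) : ⟪mact M u, v⟫_ℂ = ⟪u, mact M v⟫_ℂ :=
  isSymmetric_toEuclideanLin_iff.2 hM u v

lemma inner_mact_self_eq_dotProduct (M : Matrix (Fin n) (Fin n) ℂ) (v : EuclideanSpace ℂ (Fin n)) :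
    ⟪v, mact M v⟫_ℂ = star (WithLp.equiv 2 _ v) ⬝ᵥ M *ᵥ WithLp.equiv 2 _ v := by
  rw [mact, EuclideanSpace.inner_eq_star_dotProduct, Matrix.ofLp_toEuclideanCLM, dotProduct_comm]
  rfl

lemma Matrix.PosSemidef.re_inner_mact_self_nonneg {M : Matrix (Fin n) (Fin n) ℂ}
    (hM : M.PosSemidef) (v : EuclideanSpace ℂ (Fin n)) : 0 ≤ (⟪v, mact M v⟫_ℂ).re := by
  rw [inner_mact_self_eq_dotProduct]
  exact (Complex.nonneg_iff.1 (hM.dotProduct_mulVec_nonneg _)).1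

lemma Matrix.PosDef.re_inner_mact_self_pos {M : Matrix (Fin n) (Fin n) ℂ} (hM : M.PosDef)
    {v : EuclideanSpace ℂ (Fin n)} (hv : v ≠ 0) : 0 < (⟪v, mact M v⟫_ℂ).re := by
  rw [inner_mact_self_eq_dotProduct]
  exact (Complex.pos_iff.1 (hM.dotProduct_mulVec_pos ((WithLp.equiv 2 _).injective.ne hv))).1

lemma inner_sub_inner_eq_of_pencil_eqns {V F₁ F₂ : Matrix (Fin n) (Fin n) ℂ}
    (hV : V.IsHermitian) (hF₁ : F₁.IsHermitian) (hF₂ : F₂.IsHermitian) (lam : ℝ)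
    {u u'' v v'' w : EuclideanSpace ℂ (Fin n)}
    (hu : u'' + mact V u = (lam : ℂ) • mact F₁ u + (lam : ℂ) ^ 2 • mact F₂ u)
    (hv : v'' + mact V v - (lam : ℂ) • mact F₁ v - (lam : ℂ) ^ 2 • mact F₂ v = w) :
    ⟪u, v''⟫_ℂ - ⟪u'', v⟫_ℂ = ⟪u, w⟫_ℂ := by
  have hT : (V.toEuclideanLin - (lam : ℂ) • F₁.toEuclideanLin
      - (lam : ℂ) ^ 2 • F₂.toEuclideanLin).IsSymmetric :=
    ((isSymmetric_toEuclideanLin_iff.2 hV).sub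
      ((isSymmetric_toEuclideanLin_iff.2 hF₁).smul (Complex.conj_ofReal lam))).sub
      ((isSymmetric_toEuclideanLin_iff.2 hF₂).smul (by simp))
  refine hT.inner_sub_inner_eq ?_ ?_
  all_goals simp only [LinearMap.sub_apply, LinearMap.smul_apply, ← mact_eq_toEuclideanLin]
  · linear_combination (norm := module) hu
  · linear_combination (norm := module) hv

end MatrixAction

theorem halfline_robin_nonneg_eigenvalue_semisimple_general {n : ℕ}
    (lam₀ : ℝ) (hlam₀ : 0 ≤ lam₀)
    (V f₁ f₂ : ℝ → Matrix (Fin n) (Fin n) ℂ)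
    (hVherm : ∀ x ∈ Iic (0 : ℝ), (V x).IsHermitian)
    (hf₁pos : ∀ x ∈ Iic (0 : ℝ), (f₁ x).PosDef)
    (hf₂pos : ∀ x ∈ Iic (0 : ℝ), (f₂ x).PosSemidef)
    (B : Matrix (Fin n) (Fin n) ℂ) (hB : B.IsHermitian)
    (y₀ y₀' y₀'' : ℝ → EuclideanSpace ℂ (Fin n))
    (hy₀ne : ∃ x ∈ Iic (0 : ℝ), y₀ x ≠ 0)
    (hy₀1 : ∀ x ∈ Iic (0 : ℝ), HasDerivWithinAt y₀ (y₀' x) (Iic 0) x)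
    (hy₀2 : ∀ x ∈ Iic (0 : ℝ), HasDerivWithinAt y₀' (y₀'' x) (Iic 0) x)
    (hy₀L2 : Integrable (fun x => ‖y₀ x‖ ^ 2) (volume.restrict (Iic 0)))
    (hy₀'L2 : Integrable (fun x => ‖y₀' x‖ ^ 2) (volume.restrict (Iic 0)))
    (hy₀eqn : ∀ x ∈ Iic (0 : ℝ), y₀'' x + mact (V x) (y₀ x)
        = (lam₀ : ℂ) • mact (f₁ x) (y₀ x) + (lam₀ : ℂ) ^ 2 • mact (f₂ x) (y₀ x))
    (hy₀bc : mact B (y₀ 0) = y₀' 0) :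
    ¬ ∃ y₁ y₁' y₁'' : ℝ → EuclideanSpace ℂ (Fin n),
      (∀ x ∈ Iic (0 : ℝ), HasDerivWithinAt y₁ (y₁' x) (Iic 0) x) ∧
      (∀ x ∈ Iic (0 : ℝ), HasDerivWithinAt y₁' (y₁'' x) (Iic 0) x) ∧
      ContinuousOn y₁'' (Iic 0) ∧
      Integrable (fun x => ‖y₁ x‖ ^ 2) (volume.restrict (Iic 0)) ∧
      Integrable (fun x => ‖y₁' x‖ ^ 2) (volume.restrict (Iic 0)) ∧
      Integrable (fun x => ‖y₁'' x‖ ^ 2) (volume.restrict (Iic 0)) ∧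
      mact B (y₁ 0) = y₁' 0 ∧
      (∀ x ∈ Iic (0 : ℝ),
        y₁'' x + mact (V x) (y₁ x) - (lam₀ : ℂ) • mact (f₁ x) (y₁ x)
            - (lam₀ : ℂ) ^ 2 • mact (f₂ x) (y₁ x)
          = mact (f₁ x + (2 * lam₀ : ℂ) • f₂ x) (y₀ x)) := by
  rintro ⟨y₁, y₁', y₁'', hy₁1, hy₁2, -, hy₁L2, hy₁'L2, -, hy₁bc, hy₁eqn⟩
  have hK : ∀ x ∈ Iic (0 : ℝ), (f₁ x + (2 * lam₀ : ℂ) • f₂ x).PosDef := fun x hx ↦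
    (hf₁pos x hx).add_posSemidef
      ((hf₂pos x hx).smul (by exact_mod_cast (by positivity : 0 ≤ 2 * lam₀)))
  have hderiv : ∀ x ∈ Iic (0 : ℝ), HasDerivWithinAt (fun t ↦ (wronskian ℂ y₀ y₀' y₁ y₁' t).re)
      (⟪y₀ x, mact (f₁ x + (2 * lam₀ : ℂ) • f₂ x) (y₀ x)⟫_ℂ).re (Iic 0) x := fun x hx ↦ by
    have h := hasDerivWithinAt_wronskian (𝕜 := ℂ) (hy₀1 x hx) (hy₀2 x hx) (hy₁1 x hx) (hy₁2 x hx)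
    rw [inner_sub_inner_eq_of_pencil_eqns (hVherm x hx) (hf₁pos x hx).isHermitian
      (hf₂pos x hx).isHermitian lam₀ (hy₀eqn x hx) (hy₁eqn x hx)] at h
    exact h.re
  have hW0 : (wronskian ℂ y₀ y₀' y₁ y₁' 0).re = 0 := by
    rw [wronskian, ← hy₀bc, ← hy₁bc, hB.inner_mact_left, sub_self, Complex.zero_re]
  have hcont : ∀ {y y' : ℝ → EuclideanSpace ℂ (Fin n)},
      (∀ x ∈ Iic (0 : ℝ), HasDerivWithinAt y (y' x) (Iic 0) x) → ContinuousOn y (Iic 0) :=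
    fun hy x hx ↦ (hy x hx).continuousWithinAt
  have hWint : IntegrableOn (fun t ↦ (wronskian ℂ y₀ y₀' y₁ y₁' t).re) (Iic 0) :=
    Complex.reCLM.integrable_comp (integrableOn_wronskian measurableSet_Iic (hcont hy₀1)
      (hcont hy₀2) (hcont hy₁1) (hcont hy₁2) hy₀L2 hy₀'L2 hy₁L2 hy₁'L2)
  obtain ⟨x₀, hx₀, hy₀x₀⟩ := hy₀ne
  exact ((hK x₀ hx₀).re_inner_mact_self_pos hy₀x₀).ne'
    (eq_zero_of_hasDerivWithinAt_Iic_nonneg_of_integrableOn hderiv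
      (fun x hx ↦ (hK x hx).posSemidef.re_inner_mact_self_nonneg _) hW0 hWint hx₀)

/-- nonnegative eigenvalues of the half-line Robin problem are semisimple:
there is no generalized eigenfunction `y₁` above a genuine eigenfunction `y₀`. -/
theorem halfline_robin_nonneg_eigenvalue_semisimple {n : ℕ} (hn : 1 ≤ n)
    (lam₀ : ℝ) (hlam₀ : 0 ≤ lam₀)
    (V f₁ f₂ : ℝ → Matrix (Fin n) (Fin n) ℂ)
    (hVcont : ContinuousOn V (Iic 0))
    (hf₁cont : ContinuousOn f₁ (Iic 0))
    (hf₂cont : ContinuousOn f₂ (Iic 0))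
    (hbdd : ∃ C : ℝ, ∀ x ∈ Iic (0 : ℝ),
      ‖Matrix.toEuclideanCLM (𝕜 := ℂ) (V x)‖ ≤ C ∧
      ‖Matrix.toEuclideanCLM (𝕜 := ℂ) (f₁ x)‖ ≤ C ∧
      ‖Matrix.toEuclideanCLM (𝕜 := ℂ) (f₂ x)‖ ≤ C)
    (hVherm : ∀ x ∈ Iic (0 : ℝ), (V x).IsHermitian)
    (hf₁herm : ∀ x ∈ Iic (0 : ℝ), (f₁ x).IsHermitian)
    (hf₂herm : ∀ x ∈ Iic (0 : ℝ), (f₂ x).IsHermitian)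
    (hf₁pos : ∀ x ∈ Iic (0 : ℝ), (f₁ x).PosDef)
    (hf₂pos : ∀ x ∈ Iic (0 : ℝ), (f₂ x).PosSemidef)
    (B : Matrix (Fin n) (Fin n) ℂ) (hB : B.IsHermitian)
    (y₀ y₀' y₀'' : ℝ → EuclideanSpace ℂ (Fin n))
    (hy₀ne : ∃ x ∈ Iic (0 : ℝ), y₀ x ≠ 0)
    (hy₀1 : ∀ x ∈ Iic (0 : ℝ), HasDerivWithinAt y₀ (y₀' x) (Iic 0) x)
    (hy₀2 : ∀ x ∈ Iic (0 : ℝ), HasDerivWithinAt y₀' (y₀'' x) (Iic 0) x)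
    (hy₀cont : ContinuousOn y₀'' (Iic 0))
    (hy₀L2 : Integrable (fun x => ‖y₀ x‖ ^ 2) (volume.restrict (Iic 0)))
    (hy₀'L2 : Integrable (fun x => ‖y₀' x‖ ^ 2) (volume.restrict (Iic 0)))
    (hy₀''L2 : Integrable (fun x => ‖y₀'' x‖ ^ 2) (volume.restrict (Iic 0)))
    (hy₀eqn : ∀ x ∈ Iic (0 : ℝ), y₀'' x + mact (V x) (y₀ x)
        = (lam₀ : ℂ) • mact (f₁ x) (y₀ x) + (lam₀ : ℂ) ^ 2 • mact (f₂ x) (y₀ x))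
    (hy₀bc : mact B (y₀ 0) = y₀' 0) :
    ¬ ∃ y₁ y₁' y₁'' : ℝ → EuclideanSpace ℂ (Fin n),
      (∀ x ∈ Iic (0 : ℝ), HasDerivWithinAt y₁ (y₁' x) (Iic 0) x) ∧
      (∀ x ∈ Iic (0 : ℝ), HasDerivWithinAt y₁' (y₁'' x) (Iic 0) x) ∧
      ContinuousOn y₁'' (Iic 0) ∧
      Integrable (fun x => ‖y₁ x‖ ^ 2) (volume.restrict (Iic 0)) ∧
      Integrable (fun x => ‖y₁' x‖ ^ 2) (volume.restrict (Iic 0)) ∧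
      Integrable (fun x => ‖y₁'' x‖ ^ 2) (volume.restrict (Iic 0)) ∧
      mact B (y₁ 0) = y₁' 0 ∧
      (∀ x ∈ Iic (0 : ℝ),
        y₁'' x + mact (V x) (y₁ x) - (lam₀ : ℂ) • mact (f₁ x) (y₁ x)
            - (lam₀ : ℂ) ^ 2 • mact (f₂ x) (y₁ x)
          = mact (f₁ x + (2 * lam₀ : ℂ) • f₂ x) (y₀ x)) :=
  halfline_robin_nonneg_eigenvalue_semisimple_general lam₀ hlam₀ V f₁ f₂ hVherm hf₁pos hf₂pos B hB
    y₀ y₀' y₀'' hy₀ne hy₀1 hy₀2 hy₀L2 hy₀'L2 hy₀eqn hy₀bc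
end
end

section
/- Let A, B, C, D ∈ M_n(ℝ) be symmetric positive definite matrices such that A commutes with C and B commutes with D, and suppose B − A is positive definite and D − C is positive semidefinite. Then for every p with 0 < p ≤ 1, the matrix B^p D^{1−p} − A^p C^{1−p} is positive definite. (Since A and C commute, A^p and C^{1−p} commute and A^p C^{1−p} is symmetric positive definite, and similarly for B, D.) -/
open Matrix

noncomputable section

/-- The real power `A^p` of a symmetric matrix, defined by the spectral functional
calculus: diagonalize and apply `t ↦ t ^ p` to the eigenvalues. -/
def herPow {n : ℕ} (A : Matrix (Fin n) (Fin n) ℝ) (hA : A.IsHermitian) (p : ℝ) :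
    Matrix (Fin n) (Fin n) ℝ :=
  hA.eigenvectorUnitary.1 *
    Matrix.diagonal (fun i => hA.eigenvalues i ^ p) *
    (star hA.eigenvectorUnitary : Matrix (Fin n) (Fin n) ℝ)

/-!
For `0 < p < 1` and `a, c > 0`, rescaling the integral representation of `x ↦ x ^ p` gives
`K * (a ^ p * c ^ (1 - p)) = ∫ t in Ioi 0, t ^ (p - 1) * (c⁻¹ + t * a⁻¹)⁻¹` with a constant
`K > 0`. Commuting symmetric matrices have a joint orthonormal eigenbasis, so the same identity
holds for the quadratic forms of `A ^ p * C ^ (1 - p)` and `(C⁻¹ + t • A⁻¹)⁻¹`. Inversion is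
order-reversing on positive definite matrices, so `B > A` and `D ≥ C` give
`C⁻¹ + t • A⁻¹ > D⁻¹ + t • B⁻¹` and then `(D⁻¹ + t • B⁻¹)⁻¹ > (C⁻¹ + t • A⁻¹)⁻¹` for every
`t > 0`; integrating against `t ^ (p - 1)` gives the claim. For `p = 1` the claim is `B - A > 0`.
-/

open Unitary Real MeasureTheory Set
open scoped ComplexOrder

namespace Matrix

section Inverse

variable {ι 𝕜 : Type*} [Fintype ι] [DecidableEq ι] [RCLike 𝕜] {M N : Matrix ι ι 𝕜}

/-- Each summand is a congruence of `M - N` or of `N`, which makes inversion order-reversing. -/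
lemma inv_sub_inv_eq_of_isUnit (hM : IsUnit M) (hN : IsUnit N) :
    N⁻¹ - M⁻¹ = M⁻¹ * (M - N) * M⁻¹ + (M⁻¹ - N⁻¹) * N * (M⁻¹ - N⁻¹) := by
  have hM' : M⁻¹ * M = 1 := nonsing_inv_mul M ((isUnit_iff_isUnit_det M).mp hM)
  have hN' : N⁻¹ * N = 1 := nonsing_inv_mul N ((isUnit_iff_isUnit_det N).mp hN)
  have hN'' : N * N⁻¹ = 1 := mul_nonsing_inv N ((isUnit_iff_isUnit_det N).mp hN)
  simp only [mul_sub, sub_mul, Matrix.mul_assoc, hN'', Matrix.mul_one]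
  simp only [← Matrix.mul_assoc, hM', hN', Matrix.one_mul]
  abel

lemma PosDef.posDef_inv_sub_inv (hM : M.PosDef) (hN : N.PosDef) (h : (M - N).PosDef) :
    (N⁻¹ - M⁻¹).PosDef := by
  rw [inv_sub_inv_eq_of_isUnit hM.isUnit hN.isUnit]
  have hMN : (M⁻¹ - N⁻¹)ᴴ = M⁻¹ - N⁻¹ := (hM.inv.isHermitian.sub hN.inv.isHermitian).eq
  refine PosDef.add_posSemidef ?_ ?_
  · simpa [hM.inv.isHermitian.eq] using
      h.conjTranspose_mul_mul_same (mulVec_injective_iff_isUnit.mpr hM.inv.isUnit)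
  · simpa [hMN] using hN.posSemidef.conjTranspose_mul_mul_same (M⁻¹ - N⁻¹)

lemma PosDef.posSemidef_inv_sub_inv (hM : M.PosDef) (hN : N.PosDef) (h : (M - N).PosSemidef) :
    (N⁻¹ - M⁻¹).PosSemidef := by
  rw [inv_sub_inv_eq_of_isUnit hM.isUnit hN.isUnit]
  have hMN : (M⁻¹ - N⁻¹)ᴴ = M⁻¹ - N⁻¹ := (hM.inv.isHermitian.sub hN.inv.isHermitian).eq
  refine PosSemidef.add ?_ ?_
  · simpa [hM.inv.isHermitian.eq] using h.conjTranspose_mul_mul_same M⁻¹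
  · simpa [hMN] using hN.posSemidef.conjTranspose_mul_mul_same (M⁻¹ - N⁻¹)

lemma posDef_inv_add_smul_inv_sub_inv_add_smul_inv {A B C D : Matrix ι ι 𝕜} (hA : A.PosDef)
    (hB : B.PosDef) (hC : C.PosDef) (hD : D.PosDef) (hBA : (B - A).PosDef)
    (hDC : (D - C).PosSemidef) {t : ℝ} (ht : 0 < t) :
    ((D⁻¹ + t • B⁻¹)⁻¹ - (C⁻¹ + t • A⁻¹)⁻¹).PosDef := by
  refine (hC.inv.add (hA.inv.smul ht)).posDef_inv_sub_inv (hD.inv.add (hB.inv.smul ht)) ?_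
  rw [show C⁻¹ + t • A⁻¹ - (D⁻¹ + t • B⁻¹) = (C⁻¹ - D⁻¹) + t • (A⁻¹ - B⁻¹) by module]
  exact PosDef.posSemidef_add (hD.posSemidef_inv_sub_inv hC hDC)
    ((hB.posDef_inv_sub_inv hA hBA).smul ht)

end Inverse

section Eigenvector

variable {ι R : Type*} [Fintype ι] [DecidableEq ι]

lemma inv_mulVec_of_mulVec_eq_smul [Field R] {M : Matrix ι ι R} (hM : IsUnit M) {x : ι → R}
    {μ : R} (hx : M *ᵥ x = μ • x) : M⁻¹ *ᵥ x = μ⁻¹ • x := by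
  have hx' : μ • (M⁻¹ *ᵥ x) = x := by
    rw [← mulVec_smul, ← hx, mulVec_mulVec,
      nonsing_inv_mul M ((isUnit_iff_isUnit_det M).mp hM), one_mulVec]
  rcases eq_or_ne μ 0 with rfl | hμ
  · rw [← hx', zero_smul, mulVec_zero, smul_zero]
  · rw [← inv_smul_smul₀ hμ (M⁻¹ *ᵥ x), hx']

lemma conjStarAlgAut_diagonal_comp_mulVec_of_mulVec_eq_smul [CommRing R] [StarRing R]
    [NoZeroDivisors R] (U : unitaryGroup ι R) {d : ι → R} {x : ι → R} {μ : R}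
    (hx : conjStarAlgAut R _ U (diagonal d) *ᵥ x = μ • x) (f : R → R) :
    conjStarAlgAut R _ U (diagonal (f ∘ d)) *ᵥ x = f μ • x := by
  set y := star (U : Matrix ι ι R) *ᵥ x
  have hUy : (U : Matrix ι ι R) *ᵥ y = x := by
    rw [mulVec_mulVec, mul_star_self_of_mem U.2, one_mulVec]
  have hdy : diagonal d *ᵥ y = μ • y := by
    rw [conjStarAlgAut_apply, ← mulVec_mulVec, ← mulVec_mulVec] at hx
    have := congrArg (star (U : Matrix ι ι R) *ᵥ ·) hx
    rwa [mulVec_mulVec _ (star _) (U : Matrix ι ι R), star_mul_self_of_mem U.2, one_mulVec,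
      mulVec_smul] at this
  have hfdy : diagonal (f ∘ d) *ᵥ y = f μ • y := by
    ext i
    have hi : d i * y i = μ * y i := by simpa [mulVec_diagonal] using congrFun hdy i
    rcases eq_or_ne (y i) 0 with h0 | h0
    · simp [mulVec_diagonal, h0]
    · simp [mulVec_diagonal, mul_right_cancel₀ h0 hi]
  rw [conjStarAlgAut_apply, ← mulVec_mulVec, ← mulVec_mulVec, hfdy, mulVec_smul, hUy]

end Eigenvector

lemma PosDef.pos_of_mulVec_eq_smul {ι : Type*} [Fintype ι] {M : Matrix ι ι ℝ} (hM : M.PosDef)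
    {x : ι → ℝ} (hx0 : x ≠ 0) {μ : ℝ} (hx : M *ᵥ x = μ • x) : 0 < μ := by
  have h := hM.dotProduct_mulVec_pos hx0
  rw [hx, star_trivial, dotProduct_smul, smul_eq_mul] at h
  exact pos_of_mul_pos_left h (by simpa using dotProduct_self_star_nonneg x)

section OrthonormalBasis

variable {ι κ : Type*} [Fintype ι] [Fintype κ] (b : OrthonormalBasis κ ℝ (EuclideanSpace ℝ ι))

lemma _root_.OrthonormalBasis.sum_dotProduct_smul (x : ι → ℝ) :
    ∑ j, (⇑(b j) ⬝ᵥ x) • ⇑(b j) = x := by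
  simpa [EuclideanSpace.inner_eq_star_dotProduct, dotProduct_comm] using
    congrArg WithLp.ofLp (b.sum_repr' (WithLp.toLp 2 x))

lemma dotProduct_mulVec_eq_sum_of_mulVec_eq_smul {M : Matrix ι ι ℝ} {m : κ → ℝ}
    (hM : ∀ j, M *ᵥ b j = m j • ⇑(b j)) (x y : ι → ℝ) :
    x ⬝ᵥ M *ᵥ y = ∑ j, m j * (⇑(b j) ⬝ᵥ x) * (⇑(b j) ⬝ᵥ y) := by
  conv_lhs => rw [← b.sum_dotProduct_smul y]
  simp only [mulVec_sum, mulVec_smul, hM, smul_smul, dotProduct_sum, dotProduct_smul,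
    smul_eq_mul]
  exact Finset.sum_congr rfl fun j _ => by rw [dotProduct_comm x]; ring

lemma isHermitian_of_mulVec_eq_smul [DecidableEq ι] {M : Matrix ι ι ℝ} {m : κ → ℝ}
    (hM : ∀ j, M *ᵥ b j = m j • ⇑(b j)) : M.IsHermitian := by
  ext i k
  have h := fun i k =>
    dotProduct_mulVec_eq_sum_of_mulVec_eq_smul b hM (Pi.single i 1) (Pi.single k 1)
  simp only [single_one_dotProduct, mulVec_single_one, col_apply, dotProduct_single_one] at h
  rw [conjTranspose_apply, star_trivial, h, h]
  exact Finset.sum_congr rfl fun j _ => mul_right_comm _ _ _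

end OrthonormalBasis

lemma IsHermitian.exists_orthonormalBasis_mulVec_eq_smul_of_commute {ι : Type*} [Fintype ι]
    [DecidableEq ι] {A C : Matrix ι ι ℝ} (hA : A.IsHermitian) (hC : C.IsHermitian)
    (hAC : Commute A C) :
    ∃ (b : OrthonormalBasis (Fin (Fintype.card ι)) ℝ (EuclideanSpace ℝ ι))
      (α γ : Fin (Fintype.card ι) → ℝ),
      ∀ j, A *ᵥ b j = α j • ⇑(b j) ∧ C *ᵥ b j = γ j • ⇑(b j) := by
  classical
  have hT₁ := isSymmetric_toEuclideanLin_iff.mpr hA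
  have hT₂ := isSymmetric_toEuclideanLin_iff.mpr hC
  have hcomm : Commute (toEuclideanLin A) (toEuclideanLin C) := by
    simp only [Commute, SemiconjBy, Module.End.mul_eq_comp, ← toLpLin_mul, hAC.eq]
  let V : ℝ × ℝ → Submodule ℝ (EuclideanSpace ℝ ι) := fun μ =>
    Module.End.eigenspace (toEuclideanLin A) μ.2 ⊓ Module.End.eigenspace (toEuclideanLin C) μ.1
  have hV₀ : DirectSum.IsInternal V := hT₁.directSum_isInternal_of_commute hT₂ hcomm
  -- A subordinate basis needs a finite index: keep only the nonzero joint eigenspaces.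
  let _ := hV₀.submodule_iSupIndep.fintypeNeBotOfFiniteDimensional
  have hV : DirectSum.IsInternal fun μ : {μ // V μ ≠ ⊥} => V μ :=
    DirectSum.isInternal_ne_bot_iff.mpr hV₀
  have hV' := (hT₁.orthogonalFamily_eigenspace_inf_eigenspace hT₂).comp
    (Subtype.val_injective (p := fun μ => V μ ≠ ⊥))
  have hn := finrank_euclideanSpace (𝕜 := ℝ) (ι := ι)
  refine ⟨hV.subordinateOrthonormalBasis hn hV',
    fun j => (hV.subordinateOrthonormalBasisIndex hn j hV').1.2,
    fun j => (hV.subordinateOrthonormalBasisIndex hn j hV').1.1, fun j => ?_⟩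
  obtain ⟨h₁, h₂⟩ := Submodule.mem_inf.mp (hV.subordinateOrthonormalBasis_subordinate hn j hV')
  rw [Module.End.mem_eigenspace_iff] at h₁ h₂
  exact ⟨congrArg WithLp.ofLp h₁, congrArg WithLp.ofLp h₂⟩

end Matrix

section HerPow

variable {n : ℕ} {A C : Matrix (Fin n) (Fin n) ℝ}

lemma herPow_eq_conjStarAlgAut (hA : A.IsHermitian) (p : ℝ) :
    herPow A hA p = conjStarAlgAut ℝ _ hA.eigenvectorUnitary
      (diagonal ((· ^ p) ∘ RCLike.ofReal ∘ hA.eigenvalues)) := by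
  rw [conjStarAlgAut_apply, herPow, ← coe_star]
  rfl

lemma herPow_one (hA : A.IsHermitian) : herPow A hA 1 = A := by
  conv_rhs => rw [hA.spectral_theorem]
  simp [herPow_eq_conjStarAlgAut, Function.comp_def]

lemma herPow_zero (hA : A.IsHermitian) : herPow A hA 0 = 1 := by
  simp [herPow_eq_conjStarAlgAut, Function.comp_def]

lemma herPow_mulVec_of_mulVec_eq_smul (hA : A.IsHermitian) {x : Fin n → ℝ} {μ : ℝ}
    (hx : A *ᵥ x = μ • x) (p : ℝ) : herPow A hA p *ᵥ x = μ ^ p • x := by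
  rw [hA.spectral_theorem] at hx
  rw [herPow_eq_conjStarAlgAut]
  exact conjStarAlgAut_diagonal_comp_mulVec_of_mulVec_eq_smul _ hx _

lemma herPow_mul_herPow_mulVec_of_mulVec_eq_smul (hA : A.IsHermitian) (hC : C.IsHermitian)
    {x : Fin n → ℝ} {α γ : ℝ} (hxA : A *ᵥ x = α • x) (hxC : C *ᵥ x = γ • x) (p q : ℝ) :
    (herPow A hA p * herPow C hC q) *ᵥ x = (α ^ p * γ ^ q) • x := by
  rw [← mulVec_mulVec, herPow_mulVec_of_mulVec_eq_smul hC hxC, mulVec_smul,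
    herPow_mulVec_of_mulVec_eq_smul hA hxA, smul_smul, mul_comm]

lemma isHermitian_herPow_mul_herPow (hA : A.IsHermitian) (hC : C.IsHermitian)
    (hAC : Commute A C) (p q : ℝ) : (herPow A hA p * herPow C hC q).IsHermitian := by
  obtain ⟨b, α, γ, hb⟩ := hA.exists_orthonormalBasis_mulVec_eq_smul_of_commute hC hAC
  exact isHermitian_of_mulVec_eq_smul b fun j =>
    herPow_mul_herPow_mulVec_of_mulVec_eq_smul hA hC (hb j).1 (hb j).2 p q

end HerPow

section Integral

variable {p a c : ℝ}

lemma rpow_mul_inv_add_inv_eq_mul_rpowIntegrand₀₁ (hp : p ∈ Ioo 0 1) (ha : 0 < a) (hc : 0 < c)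
    {t : ℝ} (ht : 0 < t) :
    t ^ (p - 1) * (c⁻¹ + t * a⁻¹)⁻¹ = c * rpowIntegrand₀₁ p t (a / c) := by
  rw [rpowIntegrand₀₁_eq_pow_div hp ht.le (by positivity)]
  field_simp
  ring

lemma integrableOn_rpow_mul_inv_add_inv (hp : p ∈ Ioo 0 1) (ha : 0 < a) (hc : 0 < c) :
    IntegrableOn (fun t => t ^ (p - 1) * (c⁻¹ + t * a⁻¹)⁻¹) (Ioi 0) :=
  IntegrableOn.congr_fun ((integrableOn_rpowIntegrand₀₁_Ioi hp (by positivity)).const_mul c)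
    (fun _ ht => (rpow_mul_inv_add_inv_eq_mul_rpowIntegrand₀₁ hp ha hc ht).symm)
    measurableSet_Ioi

lemma integral_rpow_mul_inv_add_inv (hp : p ∈ Ioo 0 1) (ha : 0 < a) (hc : 0 < c) :
    ∫ t in Ioi 0, t ^ (p - 1) * (c⁻¹ + t * a⁻¹)⁻¹ =
      (∫ t in Ioi 0, rpowIntegrand₀₁ p t 1) * (a ^ p * c ^ (1 - p)) := by
  rw [setIntegral_congr_fun measurableSet_Ioi
      (fun _ ht => rpow_mul_inv_add_inv_eq_mul_rpowIntegrand₀₁ hp ha hc ht), integral_const_mul,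
    integral_rpowIntegrand₀₁_eq_rpow_mul_const hp (by positivity),
    div_rpow ha.le hc.le, rpow_sub hc, rpow_one]
  field_simp

lemma setIntegral_pos_of_forall_mem_pos {X : Type*} [MeasurableSpace X] {μ : Measure X}
    {s : Set X} {f : X → ℝ} (hs : MeasurableSet s) (hμs : μ s ≠ 0) (hf : IntegrableOn f s μ)
    (hpos : ∀ x ∈ s, 0 < f x) : 0 < ∫ x in s, f x ∂μ := by
  rw [setIntegral_pos_iff_support_of_nonneg_ae
    (ae_restrict_of_forall_mem hs fun x hx => (hpos x hx).le) hf,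
    Set.inter_eq_right.mpr fun x hx => Function.mem_support.mpr (hpos x hx).ne']
  exact pos_iff_ne_zero.mpr hμs

end Integral

section IntegralRepresentation

variable {n : ℕ}

def geomMeanIntegrand (A C : Matrix (Fin n) (Fin n) ℝ) (p : ℝ) (v : Fin n → ℝ) (t : ℝ) : ℝ :=
  t ^ (p - 1) * (v ⬝ᵥ (C⁻¹ + t • A⁻¹)⁻¹ *ᵥ v)

variable {A C : Matrix (Fin n) (Fin n) ℝ}

theorem integrableOn_and_integral_geomMeanIntegrand (hA : A.PosDef) (hC : C.PosDef)
    (hAC : Commute A C) {p : ℝ} (hp : p ∈ Ioo 0 1) (v : Fin n → ℝ) :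
    IntegrableOn (geomMeanIntegrand A C p v) (Ioi 0) ∧
      ∫ t in Ioi 0, geomMeanIntegrand A C p v t =
        (∫ t in Ioi 0, rpowIntegrand₀₁ p t 1) *
          (v ⬝ᵥ (herPow A hA.1 p * herPow C hC.1 (1 - p)) *ᵥ v) := by
  obtain ⟨b, α, γ, hb⟩ := hA.1.exists_orthonormalBasis_mulVec_eq_smul_of_commute hC.1 hAC
  have hb0 : ∀ j, ⇑(b j) ≠ 0 := fun j => (WithLp.ofLp_eq_zero 2).not.mpr (b.orthonormal.ne_zero j)
  have hα : ∀ j, 0 < α j := fun j => hA.pos_of_mulVec_eq_smul (hb0 j) (hb j).1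
  have hγ : ∀ j, 0 < γ j := fun j => hC.pos_of_mulVec_eq_smul (hb0 j) (hb j).2
  set w : Fin (Fintype.card (Fin n)) → ℝ := fun j => (⇑(b j) ⬝ᵥ v) * (⇑(b j) ⬝ᵥ v)
  have hres : EqOn (geomMeanIntegrand A C p v)
      (fun t => ∑ j, w j * (t ^ (p - 1) * ((γ j)⁻¹ + t * (α j)⁻¹)⁻¹)) (Ioi 0) := by
    intro t ht
    have hM : ∀ j, (C⁻¹ + t • A⁻¹)⁻¹ *ᵥ b j = ((γ j)⁻¹ + t * (α j)⁻¹)⁻¹ • ⇑(b j) := fun j => by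
      refine inv_mulVec_of_mulVec_eq_smul (hC.inv.add (hA.inv.smul ht)).isUnit ?_
      rw [add_mulVec, smul_mulVec, inv_mulVec_of_mulVec_eq_smul hA.isUnit (hb j).1,
        inv_mulVec_of_mulVec_eq_smul hC.isUnit (hb j).2, smul_smul, add_smul]
    simp only [geomMeanIntegrand, dotProduct_mulVec_eq_sum_of_mulVec_eq_smul b hM,
      Finset.mul_sum, w]
    exact Finset.sum_congr rfl fun j _ => by ring
  have hP : v ⬝ᵥ (herPow A hA.1 p * herPow C hC.1 (1 - p)) *ᵥ v =
      ∑ j, w j * (α j ^ p * γ j ^ (1 - p)) := by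
    rw [dotProduct_mulVec_eq_sum_of_mulVec_eq_smul b fun j =>
      herPow_mul_herPow_mulVec_of_mulVec_eq_smul hA.1 hC.1 (hb j).1 (hb j).2 p (1 - p)]
    exact Finset.sum_congr rfl fun j _ => by ring
  have hint : ∀ j, IntegrableOn (fun t => w j * (t ^ (p - 1) * ((γ j)⁻¹ + t * (α j)⁻¹)⁻¹))
      (Ioi 0) := fun j => (integrableOn_rpow_mul_inv_add_inv hp (hα j) (hγ j)).const_mul _
  refine ⟨IntegrableOn.congr_fun (integrable_finsetSum _ fun j _ => hint j) hres.symm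
    measurableSet_Ioi, ?_⟩
  rw [setIntegral_congr_fun measurableSet_Ioi hres, integral_finsetSum _ fun j _ => hint j, hP,
    Finset.mul_sum]
  refine Finset.sum_congr rfl fun j _ => ?_
  rw [integral_const_mul, integral_rpow_mul_inv_add_inv hp (hα j) (hγ j)]
  ring

end IntegralRepresentation

/-- matrix interpolation inequality: for commuting pairs of symmetric
positive definite matrices with `B - A > 0` and `D - C ≥ 0`, one has
`B^p D^(1-p) - A^p C^(1-p) > 0` for all `0 < p ≤ 1`. -/
theorem matrix_interpolation_strict {n : ℕ}
    (A B C D : Matrix (Fin n) (Fin n) ℝ)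
    (hA : A.PosDef) (hB : B.PosDef) (hC : C.PosDef) (hD : D.PosDef)
    (hAC : A * C = C * A) (hBD : B * D = D * B)
    (hBA : (B - A).PosDef) (hDC : (D - C).PosSemidef)
    (p : ℝ) (hp0 : 0 < p) (hp1 : p ≤ 1) :
    (herPow B hB.1 p * herPow D hD.1 (1 - p)
      - herPow A hA.1 p * herPow C hC.1 (1 - p)).PosDef := by
  rcases hp1.lt_or_eq with hp1 | rfl
  · have hp : p ∈ Ioo 0 1 := ⟨hp0, hp1⟩
    refine posDef_iff_dotProduct_mulVec.mpr ⟨(isHermitian_herPow_mul_herPow hB.1 hD.1 hBD _ _).sub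
      (isHermitian_herPow_mul_herPow hA.1 hC.1 hAC _ _), fun v hv => ?_⟩
    obtain ⟨hiAC, hAC'⟩ := integrableOn_and_integral_geomMeanIntegrand hA hC hAC hp v
    obtain ⟨hiBD, hBD'⟩ := integrableOn_and_integral_geomMeanIntegrand hB hD hBD hp v
    have hpos : 0 < ∫ t in Ioi 0, (geomMeanIntegrand B D p v t - geomMeanIntegrand A C p v t) := by
      refine setIntegral_pos_of_forall_mem_pos measurableSet_Ioi (by simp) (hiBD.sub hiAC)
        fun t ht => ?_
      have hM := posDef_inv_add_smul_inv_sub_inv_add_smul_inv hA hB hC hD hBA hDC ht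
      rw [geomMeanIntegrand, geomMeanIntegrand, ← mul_sub, ← dotProduct_sub, ← sub_mulVec]
      exact mul_pos (rpow_pos_of_pos ht _) (by simpa using hM.dotProduct_mulVec_pos hv)
    rw [integral_sub hiBD hiAC, hBD', hAC', ← mul_sub] at hpos
    rw [star_trivial, sub_mulVec, dotProduct_sub]
    exact pos_of_mul_pos_right hpos (integral_rpowIntegrand₀₁_one_pos hp).le
  · simpa [herPow_one, herPow_zero] using hBA
end
end

section
/- Let A, B ∈ M_n(ℝ) be symmetric positive definite matrices with B − A positive definite. Then for every p with 0 < p ≤ 1, the matrix B^p − A^p is positive definite (Löwner's strict monotonicity of the matrix power t ↦ t^p). -/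
/-!
For `0 < p < 1` and `x ≥ 0`, `x ^ p` is a positive multiple of
`∫ t in Ioi 0, t ^ p * (t⁻¹ - (t + x)⁻¹)` (`Real.rpowIntegrand₀₁`). Diagonalizing, the quadratic
form of `A ^ p` is the same multiple of the integral of the quadratic forms of
`t ^ p • (t⁻¹ • 1 - (t • 1 + A)⁻¹)`. Each of these is strictly monotone in `A`, because inversion
is strictly antitone on positive definite matrices, so the integral is strictly monotone too.
-/

open Matrix

noncomputable section

open MeasureTheory Set Real
open scoped ComplexOrder

lemma MeasureTheory.setIntegral_pos_of_forall_pos {α : Type*} [MeasurableSpace α]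
    {μ : Measure α} {s : Set α} {f : α → ℝ} (hs : MeasurableSet s) (hμs : μ s ≠ 0)
    (hfi : IntegrableOn f s μ) (hf : ∀ x ∈ s, 0 < f x) : 0 < ∫ x in s, f x ∂μ := by
  rw [setIntegral_pos_iff_support_of_nonneg_ae
    (ae_restrict_of_forall_mem hs fun x hx => (hf x hx).le) hfi]
  exact (pos_iff_ne_zero.mpr hμs).trans_le (measure_mono fun x hx => ⟨(hf x hx).ne', hx⟩)

namespace Matrix

variable {ι : Type*} [Fintype ι] [DecidableEq ι]

theorem PosDef.inv_sub_inv_of_sub {𝕜 : Type*} [RCLike 𝕜] {A B : Matrix ι ι 𝕜} (hA : A.PosDef)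
    (hBA : (B - A).PosDef) : (A⁻¹ - B⁻¹).PosDef := by
  have hB : B.PosDef := by simpa using hA.add hBA
  have : Invertible A := hA.isUnit.invertible
  have : Invertible B := hB.isUnit.invertible
  set C := (B - A) * B⁻¹
  have hsplit : A⁻¹ - B⁻¹ = (B⁻¹)ᴴ * (B - A) * B⁻¹ + Cᴴ * A⁻¹ * C := by
    simp only [C, conjTranspose_mul, conjTranspose_nonsing_inv, hB.1.eq, hBA.1.eq]
    simp only [Matrix.sub_mul, Matrix.mul_sub, Matrix.mul_assoc, Matrix.mul_inv_of_invertible,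
      Matrix.mul_one, Matrix.inv_mul_cancel_left_of_invertible]
    abel
  rw [hsplit]
  exact (hBA.conjTranspose_mul_mul_same (mulVec_injective_of_isUnit
    (isUnit_nonsing_inv_iff.mpr hB.isUnit))).add_posSemidef
    (hA.inv.posSemidef.conjTranspose_mul_mul_same C)

lemma dotProduct_mul_diagonal_mul_transpose_mulVec (U : Matrix ι ι ℝ) (d v : ι → ℝ) :
    v ⬝ᵥ ((U * diagonal d * Uᵀ) *ᵥ v) = ∑ i, d i * (Uᵀ *ᵥ v) i ^ 2 := by
  rw [← mulVec_mulVec, ← mulVec_mulVec, dotProduct_mulVec, ← mulVec_transpose]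
  simp only [dotProduct, mulVec_diagonal]
  exact Finset.sum_congr rfl fun i _ => by ring

namespace IsHermitian

variable {A : Matrix ι ι ℝ} (hA : A.IsHermitian)
include hA

lemma dotProduct_cfc_mulVec (f : ℝ → ℝ) (v : ι → ℝ) :
    v ⬝ᵥ (cfc f A *ᵥ v) =
      ∑ i, f (hA.eigenvalues i) * ((hA.eigenvectorUnitary.1)ᵀ *ᵥ v) i ^ 2 := by
  rw [hA.cfc_eq, IsHermitian.cfc, Unitary.conjStarAlgAut_apply]
  exact dotProduct_mul_diagonal_mul_transpose_mulVec _ _ v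

variable {α : Type*} [MeasurableSpace α] {μ : Measure α} {f : α → ℝ → ℝ}

lemma integrable_dotProduct_cfc_mulVec
    (hf : ∀ i, Integrable (fun t => f t (hA.eigenvalues i)) μ) (v : ι → ℝ) :
    Integrable (fun t => v ⬝ᵥ (cfc (f t) A *ᵥ v)) μ := by
  simp_rw [hA.dotProduct_cfc_mulVec]
  exact integrable_finsetSum _ fun i _ => (hf i).mul_const _

lemma integral_dotProduct_cfc_mulVec
    (hf : ∀ i, Integrable (fun t => f t (hA.eigenvalues i)) μ) (v : ι → ℝ) :
    ∫ t, v ⬝ᵥ (cfc (f t) A *ᵥ v) ∂μ = v ⬝ᵥ (cfc (fun x => ∫ t, f t x ∂μ) A *ᵥ v) := by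
  simp_rw [hA.dotProduct_cfc_mulVec]
  rw [integral_finsetSum _ fun i _ => (hf i).mul_const _]
  simp_rw [integral_mul_const]

end IsHermitian

namespace PosSemidef

variable {A B : Matrix ι ι ℝ} {p t : ℝ}

lemma cfc_rpowIntegrand₀₁ (hA : A.PosSemidef) (hp : p ≠ 1) (ht : 0 < t) :
    cfc (rpowIntegrand₀₁ p t) A = t ^ (p - 1) • 1 - t ^ p • (t • 1 + A)⁻¹ := by
  have hspec : ∀ x ∈ spectrum ℝ A, t + x ≠ 0 := by
    rw [hA.1.spectrum_real_eq_range_eigenvalues]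
    rintro - ⟨i, rfl⟩
    linarith [hA.eigenvalues_nonneg i]
  have hcont (g : ℝ → ℝ) : ContinuousOn g (spectrum ℝ A) := A.finite_real_spectrum.continuousOn g
  have hsa : IsSelfAdjoint A := hA.1
  rw [rpowIntegrand₀₁_eq_sub hp ht, cfc_sub _ _ _ (hcont _) (hcont _), cfc_const _ A,
    cfc_const_mul _ _ _ (hcont _), cfc_inv _ _ hspec (hcont _), cfc_const_add _ _ _ (hcont _),
    cfc_id' ℝ A, ← nonsing_inv_eq_ringInverse, Algebra.algebraMap_eq_smul_one,
    Algebra.algebraMap_eq_smul_one]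

lemma posDef_cfc_rpowIntegrand₀₁_sub (hA : A.PosSemidef) (hBA : (B - A).PosDef) (hp : p ≠ 1)
    (ht : 0 < t) : (cfc (rpowIntegrand₀₁ p t) B - cfc (rpowIntegrand₀₁ p t) A).PosDef := by
  have hB : B.PosSemidef := by simpa using hA.add hBA.posSemidef
  have hAt : (t • 1 + A).PosDef := (PosDef.one.smul ht).add_posSemidef hA
  rw [hB.cfc_rpowIntegrand₀₁ hp ht, hA.cfc_rpowIntegrand₀₁ hp ht, sub_sub_sub_cancel_left,
    ← smul_sub]
  exact (hAt.inv_sub_inv_of_sub (by simpa using hBA)).smul (rpow_pos_of_pos ht p)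

lemma integrableOn_dotProduct_cfc_rpowIntegrand₀₁_mulVec (hA : A.PosSemidef) (hp : p ∈ Ioo 0 1)
    (v : ι → ℝ) : IntegrableOn (fun t => v ⬝ᵥ (cfc (rpowIntegrand₀₁ p t) A *ᵥ v)) (Ioi 0) :=
  hA.1.integrable_dotProduct_cfc_mulVec
    (fun i => integrableOn_rpowIntegrand₀₁_Ioi hp (hA.eigenvalues_nonneg i)) v

lemma integral_dotProduct_cfc_rpowIntegrand₀₁_mulVec (hA : A.PosSemidef) (hp : p ∈ Ioo 0 1)
    (v : ι → ℝ) :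
    ∫ t in Ioi 0, v ⬝ᵥ (cfc (rpowIntegrand₀₁ p t) A *ᵥ v) =
      (∫ t in Ioi 0, rpowIntegrand₀₁ p t 1) * v ⬝ᵥ (cfc (fun x : ℝ => x ^ p) A *ᵥ v) := by
  rw [hA.1.integral_dotProduct_cfc_mulVec
      (fun i => integrableOn_rpowIntegrand₀₁_Ioi hp (hA.eigenvalues_nonneg i)),
    hA.1.dotProduct_cfc_mulVec, hA.1.dotProduct_cfc_mulVec, Finset.mul_sum]
  refine Finset.sum_congr rfl fun i _ => ?_
  rw [integral_rpowIntegrand₀₁_eq_rpow_mul_const hp (hA.eigenvalues_nonneg i)]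
  ring

theorem posDef_cfc_rpow_sub (hA : A.PosSemidef) (hBA : (B - A).PosDef) (hp : p ∈ Ioc 0 1) :
    (cfc (fun x : ℝ => x ^ p) B - cfc (fun x : ℝ => x ^ p) A).PosDef := by
  have hB : B.PosSemidef := by simpa using hA.add hBA.posSemidef
  obtain rfl | hp1 := hp.2.eq_or_lt
  · simp only [rpow_one]
    rwa [cfc_id' ℝ A hA.1.isSelfAdjoint, cfc_id' ℝ B hB.1.isSelfAdjoint]
  have hp' : p ∈ Ioo 0 1 := ⟨hp.1, hp1⟩
  refine .of_dotProduct_mulVec_pos (.sub (cfc_predicate _ B) (cfc_predicate _ A)) fun v hv => ?_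
  have hintB := hB.integrableOn_dotProduct_cfc_rpowIntegrand₀₁_mulVec hp' v
  have hintA := hA.integrableOn_dotProduct_cfc_rpowIntegrand₀₁_mulVec hp' v
  rw [star_trivial, sub_mulVec, dotProduct_sub,
    ← mul_lt_mul_iff_right₀ (integral_rpowIntegrand₀₁_one_pos hp'), mul_zero, mul_sub,
    ← hB.integral_dotProduct_cfc_rpowIntegrand₀₁_mulVec hp',
    ← hA.integral_dotProduct_cfc_rpowIntegrand₀₁_mulVec hp', ← integral_sub hintB hintA]
  refine setIntegral_pos_of_forall_pos measurableSet_Ioi (by simp) (hintB.sub hintA)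
    fun t ht => ?_
  simpa [sub_mulVec, dotProduct_sub] using
    (hA.posDef_cfc_rpowIntegrand₀₁_sub hBA hp1.ne ht).dotProduct_mulVec_pos hv

end PosSemidef

end Matrix

lemma herPow_eq_cfc {n : ℕ} {A : Matrix (Fin n) (Fin n) ℝ} (hA : A.IsHermitian) (p : ℝ) :
    herPow A hA p = cfc (fun x : ℝ => x ^ p) A := by
  rw [hA.cfc_eq]
  rfl

/-- Löwner's strict monotonicity of the matrix power `t ↦ t^p`,
`0 < p ≤ 1`: if `A, B` are symmetric positive definite and `B - A > 0`, then
`B^p - A^p > 0`. -/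
theorem loewner_strict_monotonicity_rpow {n : ℕ}
    (A B : Matrix (Fin n) (Fin n) ℝ)
    (hA : A.PosDef) (hB : B.PosDef) (hBA : (B - A).PosDef)
    (p : ℝ) (hp0 : 0 < p) (hp1 : p ≤ 1) :
    (herPow B hB.1 p - herPow A hA.1 p).PosDef := by
  rw [herPow_eq_cfc, herPow_eq_cfc]
  exact hA.posSemidef.posDef_cfc_rpow_sub hBA ⟨hp0, hp1⟩
end
end

section
/- Let A : ℝ → M_n(ℝ) be differentiable with A(t) symmetric for every t, let R : ℝ → M_n(ℝ) be differentiable with R(t) orthogonal for every t, let d₁, …, d_n : ℝ → ℝ be functions with d₁(t), …, d_n(t) pairwise distinct for every t, set D(t) = diag(d₁(t), …, d_n(t)), and assume A(t)R(t) = R(t)D(t) for every t. Let f : ℝ → ℝ be differentiable and define f(A)(t) := R(t)·diag(f(d₁(t)), …, f(d_n(t)))·R(t)ᵀ. Then the map t ↦ f(A)(t) is differentiable and for all indices j, k: if j ≠ k then (R(t)ᵀ (f(A))′(t) R(t))_{jk} = (R(t)ᵀ A′(t) R(t))_{jk} · (f(d_j(t)) − f(d_k(t)))/(d_j(t) − d_k(t)),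 and (R(t)ᵀ (f(A))′(t) R(t))_{jj} = (R(t)ᵀ A′(t) R(t))_{jj} · f′(d_j(t)). -/
open Matrix

noncomputable section

/-!
Write `A = R D Rᵀ` and `f(A) = R f(D) Rᵀ`, and let `S = Rᵀ R'`, which is skew-symmetric because
`Rᵀ R = 1`. For any differentiable diagonal family `Λ`, the product rule gives
`Rᵀ (R Λ Rᵀ)' R = S Λ - Λ S + Λ'`, whose `(j, k)` entry is `S_jk (λ_k - λ_j)` off the diagonal
and `λ'_j` on it. Applying this to `Λ = D` and to `Λ = f(D)` and comparing entries gives the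
formula; the eigenvalues `d_j = (Rᵀ A R)_jj` are differentiable since `R` and `A` are.
-/

section MatrixDeriv

variable {𝕜 : Type*} [NontriviallyNormedField 𝕜] {l m n : Type*}

def HasMatrixDerivAt (M : 𝕜 → Matrix m n 𝕜) (M' : Matrix m n 𝕜) (t : 𝕜) : Prop :=
  ∀ i j, HasDerivAt (fun s => M s i j) (M' i j) t

theorem hasMatrixDerivAt_const (M : Matrix m n 𝕜) (t : 𝕜) :
    HasMatrixDerivAt (fun _ => M) 0 t :=
  fun i j => hasDerivAt_const t (M i j)

theorem HasMatrixDerivAt.unique {M : 𝕜 → Matrix m n 𝕜} {M₁ M₂ : Matrix m n 𝕜} {t : 𝕜}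
    (h₁ : HasMatrixDerivAt M M₁ t) (h₂ : HasMatrixDerivAt M M₂ t) : M₁ = M₂ :=
  Matrix.ext fun i j => (h₁ i j).unique (h₂ i j)

theorem HasMatrixDerivAt.transpose {M : 𝕜 → Matrix m n 𝕜} {M' : Matrix m n 𝕜} {t : 𝕜}
    (h : HasMatrixDerivAt M M' t) : HasMatrixDerivAt (fun s => (M s)ᵀ) M'ᵀ t :=
  fun i j => h j i

theorem HasMatrixDerivAt.mul [Fintype m] {M : 𝕜 → Matrix l m 𝕜} {N : 𝕜 → Matrix m n 𝕜}
    {M' : Matrix l m 𝕜} {N' : Matrix m n 𝕜} {t : 𝕜}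
    (hM : HasMatrixDerivAt M M' t) (hN : HasMatrixDerivAt N N' t) :
    HasMatrixDerivAt (fun s => M s * N s) (M' * N t + M t * N') t := by
  intro i k
  have h := HasDerivAt.fun_sum fun j (_ : j ∈ Finset.univ) => (hM i j).fun_mul (hN j k)
  simpa only [Matrix.add_apply, Matrix.mul_apply, Finset.sum_add_distrib] using h

theorem hasMatrixDerivAt_diagonal [DecidableEq n] {e : n → 𝕜 → 𝕜} {e' : n → 𝕜} {t : 𝕜}
    (h : ∀ i, HasDerivAt (e i) (e' i) t) :
    HasMatrixDerivAt (fun s => diagonal fun i => e i s) (diagonal e') t := by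
  intro i j
  by_cases hij : i = j
  · subst hij
    simpa only [diagonal_apply_eq] using h i
  · simpa only [diagonal_apply_ne _ hij] using hasDerivAt_const t (0 : 𝕜)

theorem HasMatrixDerivAt.conj_diagonal [Fintype n] [DecidableEq n] {R : 𝕜 → Matrix m n 𝕜}
    {R' : Matrix m n 𝕜} {e : n → 𝕜 → 𝕜} {e' : n → 𝕜} {t : 𝕜}
    (hR : HasMatrixDerivAt R R' t) (he : ∀ i, HasDerivAt (e i) (e' i) t) :
    HasMatrixDerivAt (fun s => R s * diagonal (fun i => e i s) * (R s)ᵀ)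
      (R' * diagonal (fun i => e i t) * (R t)ᵀ + R t * diagonal e' * (R t)ᵀ
        + R t * diagonal (fun i => e i t) * R'ᵀ) t := by
  have h := (hR.mul (hasMatrixDerivAt_diagonal he)).mul hR.transpose
  convert h using 1
  simp only [Matrix.add_mul, Matrix.mul_assoc]

theorem hasDerivAt_of_hasMatrixDerivAt_diagonal [DecidableEq n] {e : n → 𝕜 → 𝕜}
    {M' : Matrix n n 𝕜} {t : 𝕜} (h : HasMatrixDerivAt (fun s => diagonal fun i => e i s) M' t)
    (i : n) : HasDerivAt (e i) (M' i i) t := by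
  simpa only [diagonal_apply_eq] using h i i

theorem HasMatrixDerivAt.transpose_mul_deriv_skew [Fintype m] [DecidableEq n]
    {R : 𝕜 → Matrix m n 𝕜} {R' : Matrix m n 𝕜} {t : 𝕜} (hR : HasMatrixDerivAt R R' t)
    (horth : ∀ s, (R s)ᵀ * R s = 1) :
    ((R t)ᵀ * R')ᵀ = -((R t)ᵀ * R') := by
  have h₁ := hR.transpose.mul hR
  simp only [horth] at h₁
  have h₀ : R'ᵀ * R t + (R t)ᵀ * R' = 0 := h₁.unique (hasMatrixDerivAt_const 1 t)
  rw [Matrix.transpose_mul, Matrix.transpose_transpose]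
  exact eq_neg_of_add_eq_zero_left h₀

end MatrixDeriv

section Conjugation

variable {α : Type*} [CommRing α] {m n : Type*} [Fintype m] [Fintype n] [DecidableEq n]

theorem transpose_mul_conj_diagonal_deriv_mul_apply {Q Q' : Matrix m n α}
    (horth : Qᵀ * Q = 1) (hskew : (Qᵀ * Q')ᵀ = -(Qᵀ * Q')) (g h : n → α) (j k : n) :
    (Qᵀ * (Q' * diagonal g * Qᵀ + Q * diagonal h * Qᵀ + Q * diagonal g * Q'ᵀ) * Q) j k
      = (Qᵀ * Q') j k * (g k - g j) + diagonal h j k := by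
  have hconj : Qᵀ * (Q' * diagonal g * Qᵀ + Q * diagonal h * Qᵀ + Q * diagonal g * Q'ᵀ) * Q
      = Qᵀ * Q' * diagonal g + diagonal h + diagonal g * (Qᵀ * Q')ᵀ := by
    simp only [Matrix.mul_add, Matrix.add_mul, Matrix.transpose_mul, Matrix.transpose_transpose,
      Matrix.mul_assoc, horth, Matrix.mul_one]
    simp only [← Matrix.mul_assoc, horth, Matrix.one_mul]
  rw [hconj, hskew, Matrix.add_apply, Matrix.add_apply, mul_diagonal, Matrix.mul_neg,
    Matrix.neg_apply, diagonal_mul]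
  ring

theorem eq_mul_mul_transpose_of_mul_eq_mul {A Q D : Matrix n n α} (horth : Qᵀ * Q = 1)
    (h : A * Q = Q * D) : A = Q * D * Qᵀ := by
  rw [← h, Matrix.mul_assoc, mul_eq_one_comm.mp horth, Matrix.mul_one]

theorem transpose_mul_mul_eq_of_mul_eq_mul {A Q D : Matrix n n α} (horth : Qᵀ * Q = 1)
    (h : A * Q = Q * D) : Qᵀ * A * Q = D := by
  rw [Matrix.mul_assoc, h, ← Matrix.mul_assoc, horth, Matrix.one_mul]

end Conjugation

theorem loewner_derivative_formula_general {n : ℕ}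
    (A A' R : ℝ → Matrix (Fin n) (Fin n) ℝ) (d : Fin n → ℝ → ℝ) (f : ℝ → ℝ)
    (hAdiff : ∀ (t : ℝ) (i j : Fin n), HasDerivAt (fun s => A s i j) (A' t i j) t)
    (hRdiff : ∀ i j : Fin n, Differentiable ℝ (fun t => R t i j))
    (hRorth : ∀ t : ℝ, (R t)ᵀ * R t = 1)
    (heig : ∀ t : ℝ, A t * R t = R t * Matrix.diagonal (fun j => d j t))
    (hf : Differentiable ℝ f) :
    ∃ F' : ℝ → Matrix (Fin n) (Fin n) ℝ,
      (∀ (t : ℝ) (i j : Fin n),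
        HasDerivAt
          (fun s => (R s * Matrix.diagonal (fun l => f (d l s)) * (R s)ᵀ) i j)
          (F' t i j) t) ∧
      (∀ (t : ℝ) (j k : Fin n), j ≠ k →
        ((R t)ᵀ * F' t * R t) j k
          = ((R t)ᵀ * A' t * R t) j k * ((f (d j t) - f (d k t)) / (d j t - d k t))) ∧
      (∀ (t : ℝ) (j : Fin n),
        ((R t)ᵀ * F' t * R t) j j
          = ((R t)ᵀ * A' t * R t) j j * deriv f (d j t)) := by
  set R' : ℝ → Matrix (Fin n) (Fin n) ℝ := fun t => of fun i j => deriv (fun s => R s i j) t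
  have hR : ∀ t, HasMatrixDerivAt R (R' t) t := fun t i j => (hRdiff i j t).hasDerivAt
  have hA : ∀ t, HasMatrixDerivAt A (A' t) t := hAdiff
  have hd : ∀ i t, HasDerivAt (d i) (deriv (d i) t) t := fun i t =>
    have hdiag : (fun s => (R s)ᵀ * A s * R s) = fun s => diagonal fun i => d i s :=
      funext fun s => transpose_mul_mul_eq_of_mul_eq_mul (hRorth s) (heig s)
    (hasDerivAt_of_hasMatrixDerivAt_diagonal
      (hdiag ▸ ((hR t).transpose.mul (hA t)).mul (hR t)) i).differentiableAt.hasDerivAt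
  have hA_conj : A = fun s => R s * diagonal (fun i => d i s) * (R s)ᵀ :=
    funext fun s => eq_mul_mul_transpose_of_mul_eq_mul (hRorth s) (heig s)
  have hA' : ∀ t, A' t = R' t * diagonal (fun i => d i t) * (R t)ᵀ
      + R t * diagonal (fun i => deriv (d i) t) * (R t)ᵀ
      + R t * diagonal (fun i => d i t) * (R' t)ᵀ := fun t =>
    (hA t).unique (hA_conj ▸ (hR t).conj_diagonal fun i => hd i t)
  have hconj := fun t =>
    transpose_mul_conj_diagonal_deriv_mul_apply (hRorth t) ((hR t).transpose_mul_deriv_skew hRorth)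
  refine ⟨_, fun t => (hR t).conj_diagonal fun i => (hf _).hasDerivAt.comp t (hd i t),
    fun t j k hjk => ?_, fun t j => ?_⟩
  · rw [hA', hconj, hconj, diagonal_apply_ne _ hjk, diagonal_apply_ne _ hjk]
    -- for equal eigenvalues both sides vanish, the quotient being `0 / 0 = 0`
    by_cases hdjk : d j t = d k t
    · simp [hdjk]
    · field_simp [sub_ne_zero.mpr hdjk]
      ring
  · rw [hA', hconj, hconj, diagonal_apply_eq, diagonal_apply_eq]
    ring

/-- Löwner's formula for the derivative of a matrix function
`f(A)(t) = R(t) diag(f(d₁(t)),…,f(dₙ(t))) R(t)ᵀ` along a differentiable family of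
symmetric matrices with differentiable orthogonal diagonalization. -/
theorem loewner_derivative_formula {n : ℕ}
    (A A' R : ℝ → Matrix (Fin n) (Fin n) ℝ) (d : Fin n → ℝ → ℝ) (f : ℝ → ℝ)
    (hAdiff : ∀ (t : ℝ) (i j : Fin n), HasDerivAt (fun s => A s i j) (A' t i j) t)
    (hAsym : ∀ t : ℝ, (A t)ᵀ = A t)
    (hRdiff : ∀ i j : Fin n, Differentiable ℝ (fun t => R t i j))
    (hRorth : ∀ t : ℝ, (R t)ᵀ * R t = 1)
    (hd : ∀ (t : ℝ) (j k : Fin n), j ≠ k → d j t ≠ d k t)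
    (heig : ∀ t : ℝ, A t * R t = R t * Matrix.diagonal (fun j => d j t))
    (hf : Differentiable ℝ f) :
    ∃ F' : ℝ → Matrix (Fin n) (Fin n) ℝ,
      (∀ (t : ℝ) (i j : Fin n),
        HasDerivAt
          (fun s => (R s * Matrix.diagonal (fun l => f (d l s)) * (R s)ᵀ) i j)
          (F' t i j) t) ∧
      (∀ (t : ℝ) (j k : Fin n), j ≠ k →
        ((R t)ᵀ * F' t * R t) j k
          = ((R t)ᵀ * A' t * R t) j k * ((f (d j t) - f (d k t)) / (d j t - d k t))) ∧
      (∀ (t : ℝ) (j : Fin n),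
        ((R t)ᵀ * F' t * R t) j j
          = ((R t)ᵀ * A' t * R t) j j * deriv f (d j t)) :=
  loewner_derivative_formula_general A A' R d f hAdiff hRdiff hRorth heig hf
end
end
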